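/- arXiv:2102.12099 — 8 statements merged into one kernel-verified Lean document; each statement's English description precedes it below -/
import Mathlib

section
/- Suppose R : X → PMF(Y) is a deletion ε-DP local randomizer with reference distribution ρ, t-samplable via R_∅ : {0,1}^t → Y, let ℓ ∈ ℕ and G : {0,1}^ℓ → {0,1}^t, and suppose G β-fools the density tests of R with 0 ≤ β < 1/(2·e^ε). Then R[G] is a deletion (ε + 2·e^ε·β)-DP local randomizer with reference the uniform distribution on {0,1}^ℓ: for every x ∈ X and every s ∈ {0,1}^ℓ, e^{-(ε + 2·e^ε·β)} · 2^{-ℓ} ≤ R[G](x)(s) ≤ e^{ε + 2·e^ε·β} · 2^{-ℓ}. -/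
/-!
By the layer-cake formula, the normaliser `2^{-ℓ} ∑_s π_x(R₀(G s))` is the integral over
`θ ∈ [0, e^ε]` of the acceptance probability of the density test `π_x ≥ θ` on pseudorandom seeds,
while on truly random seeds the same integral is `E_ρ[π_x] = ∑_y R x y = 1`. Fooling every test to
within `β` thus puts the normaliser within `e^ε β < 1/2` of `1`, hence within a factor
`e^{±2 e^ε β}`; together with `π_x ∈ [e^{-ε}, e^ε]` this gives the claimed bounds.
-/

open Finset

lemma antitone_ite_le_one_zero (c : ℝ) : Antitone fun θ : ℝ => if θ ≤ c then (1 : ℝ) else 0 := by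
  intro a b hab
  by_cases hb : b ≤ c
  · simp [hb, hab.trans hb]
  · by_cases ha : a ≤ c <;> simp [ha, hb]

lemma integral_ite_le_one_zero {c M : ℝ} (hc : 0 ≤ c) (hcM : c ≤ M) :
    ∫ θ in (0 : ℝ)..M, (if θ ≤ c then (1 : ℝ) else 0) = c := by
  have hind : (fun θ : ℝ => if θ ≤ c then (1 : ℝ) else 0) = (Set.Iic c).indicator 1 := by
    funext θ; simp [Set.indicator]
  rw [intervalIntegral.integral_of_le (hc.trans hcM), hind,
    MeasureTheory.setIntegral_indicator measurableSet_Iic, Set.Ioc_inter_Iic, min_eq_right hcM]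
  simp [hc]

-- The layer-cake formula for finitely many values in `[0, M]`.
theorem integral_card_filter_le_eq_sum {ι : Type*} [Fintype ι] {f : ι → ℝ} {M : ℝ}
    (hf : ∀ i, 0 ≤ f i ∧ f i ≤ M) :
    ∫ θ in (0 : ℝ)..M, ((univ.filter fun i => θ ≤ f i).card : ℝ) = ∑ i, f i := by
  simp_rw [← Finset.sum_boole]
  rw [intervalIntegral.integral_finsetSum fun i _ => (antitone_ite_le_one_zero _).intervalIntegrable]
  exact Finset.sum_congr rfl fun i _ => integral_ite_le_one_zero (hf i).1 (hf i).2

lemma antitone_card_filter_le {ι : Type*} [Fintype ι] (f : ι → ℝ) :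
    Antitone fun θ : ℝ => ((univ.filter fun i => θ ≤ f i).card : ℝ) := by
  intro a b hab
  exact Nat.cast_le.2 <| card_le_card <| monotone_filter_right _ fun _ _ => hab.trans

theorem abs_sum_div_sub_sum_div_le {ι κ : Type*} [Fintype ι] [Fintype κ] {f : ι → ℝ} {g : κ → ℝ}
    {M β a b : ℝ} (hM : 0 ≤ M) (hf : ∀ i, 0 ≤ f i ∧ f i ≤ M) (hg : ∀ k, 0 ≤ g k ∧ g k ≤ M)
    (hfool : ∀ θ ∈ Set.Icc 0 M,
      |((univ.filter fun i => θ ≤ f i).card : ℝ) / a -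
        ((univ.filter fun k => θ ≤ g k).card : ℝ) / b| ≤ β) :
    |(∑ i, f i) / a - (∑ k, g k) / b| ≤ M * β := by
  have hint : ∫ θ in (0 : ℝ)..M, (((univ.filter fun i => θ ≤ f i).card : ℝ) / a -
      ((univ.filter fun k => θ ≤ g k).card : ℝ) / b) = (∑ i, f i) / a - (∑ k, g k) / b := by
    rw [intervalIntegral.integral_sub
        ((antitone_card_filter_le f).intervalIntegrable.div_const _)
        ((antitone_card_filter_le g).intervalIntegrable.div_const _),
      intervalIntegral.integral_div, intervalIntegral.integral_div,
      integral_card_filter_le_eq_sum hf, integral_card_filter_le_eq_sum hg]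
  rw [← hint, ← Real.norm_eq_abs]
  calc _ ≤ β * |M - 0| := intervalIntegral.norm_integral_le_of_norm_le_const fun θ hθ => by
          rw [Set.uIoc_of_le hM] at hθ
          exact hfool θ ⟨hθ.1.le, hθ.2⟩
    _ = M * β := by rw [sub_zero, abs_of_nonneg hM, mul_comm]

lemma pos_of_card_fiber_div_eq {Ω Y : Type*} [Fintype Ω] [DecidableEq Y] {s : Ω → Y}
    {ρ : Y → ℝ} {N : ℝ} (hN : 0 < N) (hsamp : ∀ y, ((univ.filter fun r => s r = y).card : ℝ) / N = ρ y)
    (r : Ω) : 0 < ρ (s r) := by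
  rw [← hsamp]
  have : 0 < (univ.filter fun r' => s r' = s r).card := card_pos.2 ⟨r, by simp⟩
  positivity

theorem sum_div_comp_eq_mul_sum {Ω Y : Type*} [Fintype Ω] [Fintype Y] [DecidableEq Y]
    {s : Ω → Y} {μ ρ : Y → ℝ} {N : ℝ} (hN : N ≠ 0)
    (hsamp : ∀ y, ((univ.filter fun r => s r = y).card : ℝ) / N = ρ y)
    (hac : ∀ y, ρ y = 0 → μ y = 0) :
    ∑ r, μ (s r) / ρ (s r) = N * ∑ y, μ y := by
  rw [← sum_fiberwise' univ s fun y => μ y / ρ y, mul_sum]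
  refine sum_congr rfl fun y _ => ?_
  have hcard : ((univ.filter fun r => s r = y).card : ℝ) = N * ρ y := by
    rw [← hsamp y]; field_simp
  rw [sum_const, nsmul_eq_mul, hcard]
  by_cases hy : ρ y = 0
  · simp [hac y hy]
  · field_simp

lemma exp_neg_two_mul_le_and_le_exp_two_mul {z u : ℝ} (hz : |z - 1| ≤ u) (hu : u < 1 / 2) :
    Real.exp (-(2 * u)) ≤ z ∧ z ≤ Real.exp (2 * u) := by
  obtain ⟨hlo, hhi⟩ := abs_le.1 hz
  have hexp := Real.add_one_le_exp (2 * u)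
  have hinv : Real.exp (-(2 * u)) * Real.exp (2 * u) = 1 := by rw [← Real.exp_add]; simp
  constructor <;> nlinarith [Real.exp_pos (-(2 * u))]

lemma exp_neg_add_le_div_and_div_le_exp_add {a z ε δ : ℝ}
    (ha : Real.exp (-ε) ≤ a ∧ a ≤ Real.exp ε) (hz : Real.exp (-δ) ≤ z ∧ z ≤ Real.exp δ) :
    Real.exp (-(ε + δ)) ≤ a / z ∧ a / z ≤ Real.exp (ε + δ) := by
  have hz0 : 0 < z := (Real.exp_pos _).trans_le hz.1
  constructor
  · rw [neg_add, Real.exp_add, Real.exp_neg δ, ← div_eq_mul_inv]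
    exact div_le_div₀ ((Real.exp_pos _).le.trans ha.1) ha.1 hz0 hz.2
  · rw [← neg_neg δ, ← sub_eq_add_neg, Real.exp_sub]
    exact div_le_div₀ (Real.exp_pos _).le ha.2 (Real.exp_pos _) hz.1

theorem stmt_0_general {X Y : Type*} [Fintype Y] [DecidableEq Y]
    (R : X → Y → ℝ) (ρ : Y → ℝ) (ε β : ℝ) (t ℓ : ℕ)
    (R₀ : (Fin t → Bool) → Y) (G : (Fin ℓ → Bool) → Fin t → Bool)
    (hRpmf : ∀ x, (∀ y, 0 ≤ R x y) ∧ ∑ y, R x y = 1)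
    (hDP : ∀ x y, Real.exp (-ε) * ρ y ≤ R x y ∧ R x y ≤ Real.exp ε * ρ y)
    (hsamp : ∀ y, ((univ.filter fun r : Fin t → Bool => R₀ r = y).card : ℝ) / 2 ^ t = ρ y)
    (hβ : β < 1 / (2 * Real.exp ε))
    (hfool : ∀ x : X, ∀ θ ∈ Set.Icc (0 : ℝ) (Real.exp ε),
      |((univ.filter fun s : Fin ℓ → Bool =>
            θ ≤ R x (R₀ (G s)) / ρ (R₀ (G s))).card : ℝ) / 2 ^ ℓ -
        ((univ.filter fun r : Fin t → Bool =>
            θ ≤ R x (R₀ r) / ρ (R₀ r)).card : ℝ) / 2 ^ t| ≤ β) :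
    ∀ (x : X) (s : Fin ℓ → Bool),
      Real.exp (-(ε + 2 * Real.exp ε * β)) * ((2 : ℝ) ^ ℓ)⁻¹ ≤
        (R x (R₀ (G s)) / ρ (R₀ (G s))) /
          ∑ s' : Fin ℓ → Bool, R x (R₀ (G s')) / ρ (R₀ (G s')) ∧
      (R x (R₀ (G s)) / ρ (R₀ (G s))) /
          ∑ s' : Fin ℓ → Bool, R x (R₀ (G s')) / ρ (R₀ (G s')) ≤
        Real.exp (ε + 2 * Real.exp ε * β) * ((2 : ℝ) ^ ℓ)⁻¹ := by
  intro x s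
  have hρ : ∀ r, 0 < ρ (R₀ r) := pos_of_card_fiber_div_eq (by positivity) hsamp
  have hratio : ∀ r, Real.exp (-ε) ≤ R x (R₀ r) / ρ (R₀ r) ∧
      R x (R₀ r) / ρ (R₀ r) ≤ Real.exp ε := fun r =>
    ⟨(le_div_iff₀ (hρ r)).2 (hDP x _).1, (div_le_iff₀ (hρ r)).2 (hDP x _).2⟩
  have hratio' : ∀ r, 0 ≤ R x (R₀ r) / ρ (R₀ r) ∧ R x (R₀ r) / ρ (R₀ r) ≤ Real.exp ε :=
    fun r => ⟨(Real.exp_pos _).le.trans (hratio r).1, (hratio r).2⟩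
  have hmean : (∑ r, R x (R₀ r) / ρ (R₀ r)) / 2 ^ t = 1 := by
    rw [sum_div_comp_eq_mul_sum (by positivity) hsamp fun y hy => le_antisymm
      (by simpa [hy] using (hDP x y).2) (by simpa [hy] using (hDP x y).1), (hRpmf x).2]
    simp
  have hclose := abs_sum_div_sub_sum_div_le (Real.exp_pos ε).le (fun s' => hratio' (G s'))
    hratio' (hfool x)
  rw [hmean] at hclose
  have hu : Real.exp ε * β < 1 / 2 := by
    rw [lt_div_iff₀ (by positivity)] at hβ
    linarith
  obtain ⟨hlo, hhi⟩ := exp_neg_add_le_div_and_div_le_exp_add (hratio (G s))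
    (exp_neg_two_mul_le_and_le_exp_two_mul hclose hu)
  have hrescale : ∀ a S : ℝ, a / S = a / (S / 2 ^ ℓ) * ((2 : ℝ) ^ ℓ)⁻¹ := fun a S => by
    rw [div_div_eq_mul_div, mul_div_right_comm, mul_inv_cancel_right₀ (by positivity)]
  rw [hrescale, mul_assoc 2]
  exact ⟨by gcongr, by gcongr⟩

/-- **Compression of a deletion ε-DP local randomizer with a PRG that fools density tests.**
If `R : X → PMF(Y)` is deletion ε-DP with reference `ρ`, `t`-samplable via `R₀`, and
`G` β-fools the density tests of `R` with `0 ≤ β < 1/(2e^ε)`, then the compressed randomizer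
`R[G](x)(s) = π_x(R₀(G s)) / ∑_{s'} π_x(R₀(G s'))` is deletion `(ε + 2e^ε β)`-DP with
reference the uniform distribution on `{0,1}^ℓ`. -/
theorem stmt_0 {X Y : Type*} [Fintype X] [Fintype Y] [Nonempty X] [Nonempty Y] [DecidableEq Y]
    (R : X → Y → ℝ) (ρ : Y → ℝ) (ε β : ℝ) (t ℓ : ℕ)
    (R₀ : (Fin t → Bool) → Y) (G : (Fin ℓ → Bool) → Fin t → Bool)
    (hRpmf : ∀ x, (∀ y, 0 ≤ R x y) ∧ ∑ y, R x y = 1)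
    (hρpmf : (∀ y, 0 ≤ ρ y) ∧ ∑ y, ρ y = 1)
    (hε : 0 < ε)
    (hDP : ∀ x y, Real.exp (-ε) * ρ y ≤ R x y ∧ R x y ≤ Real.exp ε * ρ y)
    (hsamp : ∀ y, ((univ.filter fun r : Fin t → Bool => R₀ r = y).card : ℝ) / 2 ^ t = ρ y)
    (hβ0 : 0 ≤ β) (hβ : β < 1 / (2 * Real.exp ε))
    (hfool : ∀ x : X, ∀ θ ∈ Set.Icc (0 : ℝ) (Real.exp ε),
      |((univ.filter fun s : Fin ℓ → Bool =>
            θ ≤ R x (R₀ (G s)) / ρ (R₀ (G s))).card : ℝ) / 2 ^ ℓ -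
        ((univ.filter fun r : Fin t → Bool =>
            θ ≤ R x (R₀ r) / ρ (R₀ r)).card : ℝ) / 2 ^ t| ≤ β) :
    ∀ (x : X) (s : Fin ℓ → Bool),
      Real.exp (-(ε + 2 * Real.exp ε * β)) * ((2 : ℝ) ^ ℓ)⁻¹ ≤
        (R x (R₀ (G s)) / ρ (R₀ (G s))) /
          ∑ s' : Fin ℓ → Bool, R x (R₀ (G s')) / ρ (R₀ (G s')) ∧
      (R x (R₀ (G s)) / ρ (R₀ (G s))) /
          ∑ s' : Fin ℓ → Bool, R x (R₀ (G s')) / ρ (R₀ (G s')) ≤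
        Real.exp (ε + 2 * Real.exp ε * β) * ((2 : ℝ) ^ ℓ)⁻¹ :=
  stmt_0_general R ρ ε β t ℓ R₀ G hRpmf hDP hsamp hβ hfool
end

section
/- Suppose R : X → PMF(Y) is a deletion ε-DP local randomizer with reference distribution ρ, t-samplable via R_∅ : {0,1}^t → Y, and let G : {0,1}^ℓ → {0,1}^t be an arbitrary function (no pseudorandomness assumption). Then R[G] is a deletion 2ε-DP local randomizer with reference the uniform distribution on {0,1}^ℓ: for every x ∈ X and s ∈ {0,1}^ℓ, e^{-2ε} · 2^{-ℓ} ≤ R[G](x)(s) ≤ e^{2ε} · 2^{-ℓ}. -/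
open Finset

/-- **Compression with an arbitrary function `G` is deletion 2ε-DP.**
If `R` is deletion ε-DP with reference `ρ`, `t`-samplable via `R₀`, and `G` is an arbitrary
function (no pseudorandomness assumption), then the compressed randomizer
`R[G](x)(s) = π_x(R₀(G s)) / ∑_{s'} π_x(R₀(G s'))` is deletion 2ε-DP with reference
the uniform distribution on `{0,1}^ℓ`. -/
theorem stmt_3 {X Y : Type*} [Fintype X] [Fintype Y] [Nonempty X] [Nonempty Y] [DecidableEq Y]
    (R : X → Y → ℝ) (ρ : Y → ℝ) (ε : ℝ) (t ℓ : ℕ)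
    (R₀ : (Fin t → Bool) → Y) (G : (Fin ℓ → Bool) → Fin t → Bool)
    (hRpmf : ∀ x, (∀ y, 0 ≤ R x y) ∧ ∑ y, R x y = 1)
    (hρpmf : (∀ y, 0 ≤ ρ y) ∧ ∑ y, ρ y = 1)
    (hε : 0 < ε)
    (hDP : ∀ x y, Real.exp (-ε) * ρ y ≤ R x y ∧ R x y ≤ Real.exp ε * ρ y)
    (hsamp : ∀ y, ((univ.filter fun r : Fin t → Bool => R₀ r = y).card : ℝ) / 2 ^ t = ρ y) :
    ∀ (x : X) (s : Fin ℓ → Bool),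
      Real.exp (-(2 * ε)) * ((2 : ℝ) ^ ℓ)⁻¹ ≤
        (R x (R₀ (G s)) / ρ (R₀ (G s))) /
          ∑ s' : Fin ℓ → Bool, R x (R₀ (G s')) / ρ (R₀ (G s')) ∧
      (R x (R₀ (G s)) / ρ (R₀ (G s))) /
          ∑ s' : Fin ℓ → Bool, R x (R₀ (G s')) / ρ (R₀ (G s')) ≤
        Real.exp (2 * ε) * ((2 : ℝ) ^ ℓ)⁻¹ := by
  intro x s
  -- ρ is positive on the range of R₀
  have hρpos : ∀ r : Fin t → Bool, 0 < ρ (R₀ r) := by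
    intro r
    rw [← hsamp (R₀ r)]
    apply div_pos _ (by positivity)
    have : r ∈ univ.filter fun r' : Fin t → Bool => R₀ r' = R₀ r := by simp
    have hcard : 0 < (univ.filter fun r' : Fin t → Bool => R₀ r' = R₀ r).card :=
      card_pos.mpr ⟨r, this⟩
    exact_mod_cast hcard
  set π : (Fin ℓ → Bool) → ℝ := fun s' => R x (R₀ (G s')) / ρ (R₀ (G s')) with hπ
  have hπlb : ∀ s', Real.exp (-ε) ≤ π s' := fun s' =>
    (le_div_iff₀ (hρpos (G s'))).mpr (hDP x (R₀ (G s'))).1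
  have hπub : ∀ s', π s' ≤ Real.exp ε := fun s' =>
    (div_le_iff₀ (hρpos (G s'))).mpr (hDP x (R₀ (G s'))).2
  have hcardℓ : (Fintype.card (Fin ℓ → Bool) : ℝ) = 2 ^ ℓ := by
    simp [Fintype.card_fun]
  have hSlb : (2 : ℝ) ^ ℓ * Real.exp (-ε) ≤ ∑ s' : Fin ℓ → Bool, π s' := by
    calc (2 : ℝ) ^ ℓ * Real.exp (-ε)
        = ∑ _s' : Fin ℓ → Bool, Real.exp (-ε) := by
          rw [Finset.sum_const, nsmul_eq_mul]; simp [hcardℓ, Fintype.card_fun]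
      _ ≤ ∑ s' : Fin ℓ → Bool, π s' := Finset.sum_le_sum fun s' _ => hπlb s'
  have hSub : ∑ s' : Fin ℓ → Bool, π s' ≤ (2 : ℝ) ^ ℓ * Real.exp ε := by
    calc ∑ s' : Fin ℓ → Bool, π s'
        ≤ ∑ _s' : Fin ℓ → Bool, Real.exp ε := Finset.sum_le_sum fun s' _ => hπub s'
      _ = (2 : ℝ) ^ ℓ * Real.exp ε := by
          rw [Finset.sum_const, nsmul_eq_mul]; simp [Fintype.card_fun]
  have hSpos : 0 < ∑ s' : Fin ℓ → Bool, π s' :=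
    lt_of_lt_of_le (by positivity) hSlb
  constructor
  · rw [le_div_iff₀ hSpos]
    calc Real.exp (-(2 * ε)) * ((2:ℝ) ^ ℓ)⁻¹ * ∑ s' : Fin ℓ → Bool, π s'
        ≤ Real.exp (-(2 * ε)) * ((2:ℝ) ^ ℓ)⁻¹ * ((2:ℝ) ^ ℓ * Real.exp ε) := by
          apply mul_le_mul_of_nonneg_left hSub (by positivity)
      _ = Real.exp (-ε) := by
          have h2 : Real.exp (-(2*ε)) * Real.exp ε = Real.exp (-ε) := by
            rw [← Real.exp_add]; ring_nf
          have hinv : ((2:ℝ)^ℓ)⁻¹ * (2:ℝ)^ℓ = 1 := by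
            rw [inv_mul_cancel₀]; positivity
          linear_combination ((2:ℝ)^ℓ) * (((2:ℝ)^ℓ)⁻¹) * h2 + Real.exp (-ε) * hinv
      _ ≤ π s := hπlb s
  · rw [div_le_iff₀ hSpos]
    calc π s ≤ Real.exp ε := hπub s
      _ = Real.exp (2 * ε) * ((2:ℝ) ^ ℓ)⁻¹ * ((2:ℝ) ^ ℓ * Real.exp (-ε)) := by
          have h3 : Real.exp (2*ε) * Real.exp (-ε) = Real.exp ε := by
            rw [← Real.exp_add]; ring_nf
          have hinv : ((2:ℝ)^ℓ)⁻¹ * (2:ℝ)^ℓ = 1 := by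
            rw [inv_mul_cancel₀]; positivity
          linear_combination (-((2:ℝ)^ℓ) * (((2:ℝ)^ℓ)⁻¹)) * h3 - Real.exp ε * hinv
      _ ≤ Real.exp (2 * ε) * ((2:ℝ) ^ ℓ)⁻¹ * ∑ s' : Fin ℓ → Bool, π s' := by
          apply mul_le_mul_of_nonneg_left hSlb (by positivity)
end

section
/- Suppose R : X → PMF(Y) is a deletion ε-DP local randomizer with reference distribution ρ, t-samplable via R_∅ : {0,1}^t → Y, and in addition R is replacement ε_r-DP, meaning R(x)(y) ≤ e^{ε_r}·R(x')(y) for all x, x' ∈ X and y ∈ Y. Suppose G : {0,1}^ℓ → {0,1}^t β-fools the density tests of R with 0 ≤ β < 1/(2·e^ε). Then R[G] is a replacement (ε_r + 4·e^ε·β)-DP local randomizer: for all x, x' ∈ X and s ∈ {0,1}^ℓ, R[G](x)(s) ≤ e^{ε_r + 4·e^ε·β} · R[G](x')(s). -/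
/-!
The density ratios `π_x = R(x)/ρ` take values in `[0, e^ε]`, and pulled back to seeds they have
mean exactly `1`. By the layer-cake formula a mean is the integral over `θ ∈ (0, e^ε]` of the tail
probability `Pr[π_x ≥ θ]`, so fooling all density tests up to `β` moves the mean over `G`'s seeds
by at most `e^ε β`. Hence both normalising constants of `R[G](x)` and `R[G](x')` lie within a
factor `1 ± e^ε β` of `2^ℓ`, and their ratio costs at most `(1 + c)/(1 - c) ≤ e^{4c}` for
`c = e^ε β ≤ 1/2`, on top of the `e^{ε_r}` between the numerators.
-/

open Finset MeasureTheory

section LayerCake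

variable {ι : Type*} [Fintype ι]

lemma card_le_eq_sum_indicator (f : ι → ℝ) (θ : ℝ) :
    (#{i | θ ≤ f i} : ℝ) = ∑ i, (Set.Iic (f i)).indicator 1 θ := by
  simp only [Set.indicator_apply, Set.mem_Iic, Pi.one_apply, sum_boole]

lemma integrableOn_Ioc_indicator_Iic (a M : ℝ) :
    IntegrableOn ((Set.Iic a).indicator (1 : ℝ → ℝ)) (Set.Ioc 0 M) :=
  (integrableOn_const (C := (1 : ℝ)) measure_Ioc_lt_top.ne).indicator measurableSet_Iic

lemma integrableOn_card_le (f : ι → ℝ) (M : ℝ) :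
    IntegrableOn (fun θ => (#{i | θ ≤ f i} : ℝ)) (Set.Ioc 0 M) := by
  simp only [card_le_eq_sum_indicator]
  exact integrable_finsetSum _ fun i _ => integrableOn_Ioc_indicator_Iic (f i) M

lemma setIntegral_Ioc_indicator_Iic {a M : ℝ} (h0 : 0 ≤ a) (hM : a ≤ M) :
    ∫ θ in Set.Ioc 0 M, (Set.Iic a).indicator 1 θ = a := by
  rw [integral_indicator_one measurableSet_Iic, measureReal_restrict_apply measurableSet_Iic,
    Set.Iic_inter_Ioc_of_le hM, Real.volume_real_Ioc_of_le h0, sub_zero]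

theorem sum_eq_setIntegral_card_le {f : ι → ℝ} {M : ℝ} (hf : ∀ i, f i ∈ Set.Icc 0 M) :
    ∑ i, f i = ∫ θ in Set.Ioc 0 M, (#{i | θ ≤ f i} : ℝ) := by
  simp only [card_le_eq_sum_indicator]
  rw [integral_finsetSum _ fun i _ => integrableOn_Ioc_indicator_Iic (f i) M]
  exact sum_congr rfl fun i _ => (setIntegral_Ioc_indicator_Iic (hf i).1 (hf i).2).symm

theorem abs_sum_div_sub_sum_div_le_of_tails {κ : Type*} [Fintype κ] {f : ι → ℝ} {g : κ → ℝ}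
    {M β : ℝ} (a b : ℝ) (hM : 0 ≤ M) (hf : ∀ i, f i ∈ Set.Icc 0 M) (hg : ∀ j, g j ∈ Set.Icc 0 M)
    (htails : ∀ θ ∈ Set.Icc 0 M, |(#{i | θ ≤ f i} : ℝ) / a - (#{j | θ ≤ g j} : ℝ) / b| ≤ β) :
    |(∑ i, f i) / a - (∑ j, g j) / b| ≤ M * β := by
  rw [sum_eq_setIntegral_card_le hf, sum_eq_setIntegral_card_le hg, ← integral_div,
    ← integral_div, ← integral_sub ((integrableOn_card_le f M).div_const a)
      ((integrableOn_card_le g M).div_const b), ← Real.norm_eq_abs]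
  calc _ ≤ β * volume.real (Set.Ioc 0 M) := norm_setIntegral_le_of_norm_le_const
        measure_Ioc_lt_top fun θ hθ => htails θ (Set.Ioc_subset_Icc_self hθ)
    _ = M * β := by rw [Real.volume_real_Ioc_of_le hM, sub_zero, mul_comm]

end LayerCake

theorem sum_comp_eq_mul_sum_of_card_fiber {Ω Y : Type*} [Fintype Ω] [Fintype Y] [DecidableEq Y]
    {S : Ω → Y} {ρ : Y → ℝ} {c : ℝ} (hc : c ≠ 0) (hS : ∀ y, (#{ω | S ω = y} : ℝ) / c = ρ y)
    (f : Y → ℝ) : ∑ ω, f (S ω) = c * ∑ y, ρ y * f y := by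
  rw [← sum_fiberwise univ S, mul_sum]
  refine sum_congr rfl fun y _ => ?_
  rw [sum_congr rfl fun ω hω => by rw [(mem_filter.mp hω).2], sum_const, nsmul_eq_mul, ← hS y,
    ← mul_assoc, mul_div_cancel₀ _ hc]

lemma one_add_le_exp_mul_one_sub {c : ℝ} (hc0 : 0 ≤ c) (hc : c ≤ 1 / 2) :
    1 + c ≤ Real.exp (4 * c) * (1 - c) :=
  calc 1 + c ≤ (4 * c + 1) * (1 - c) := by nlinarith
    _ ≤ Real.exp (4 * c) * (1 - c) :=
      mul_le_mul_of_nonneg_right (Real.add_one_le_exp _) (by linarith)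

theorem div_le_mul_exp_mul_div {a a' A B N c K : ℝ} (ha : a ≤ K * a') (ha' : 0 ≤ a')
    (hK : 0 ≤ K) (hN : 0 < N) (hc : c < 1 / 2) (hA : |A / N - 1| ≤ c) (hB : |B / N - 1| ≤ c) :
    a / A ≤ K * Real.exp (4 * c) * (a' / B) := by
  have hc0 : 0 ≤ c := (abs_nonneg _).trans hA
  rw [abs_le] at hA hB
  have hApos : 0 < A := (div_pos_iff_of_pos_right hN).mp (by linarith)
  have hBpos : 0 < B := (div_pos_iff_of_pos_right hN).mp (by linarith)
  have hBA : B ≤ Real.exp (4 * c) * A := by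
    have : B / N ≤ Real.exp (4 * c) * (A / N) :=
      calc B / N ≤ 1 + c := by linarith
        _ ≤ Real.exp (4 * c) * (1 - c) := one_add_le_exp_mul_one_sub hc0 hc.le
        _ ≤ Real.exp (4 * c) * (A / N) := by gcongr; linarith
    rwa [← mul_div_assoc, div_le_div_iff_of_pos_right hN] at this
  rw [div_le_iff₀ hApos]
  calc a ≤ K * a' := ha
    _ = K * (a' / B) * B := by field_simp
    _ ≤ K * (a' / B) * (Real.exp (4 * c) * A) := by gcongr
    _ = K * Real.exp (4 * c) * (a' / B) * A := by ring

theorem stmt_4_general {X Y : Type*} [Fintype Y] [DecidableEq Y]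
    (R : X → Y → ℝ) (ρ : Y → ℝ) (ε εr β : ℝ) (t ℓ : ℕ)
    (R₀ : (Fin t → Bool) → Y) (G : (Fin ℓ → Bool) → Fin t → Bool)
    (hRpmf : ∀ x, (∀ y, 0 ≤ R x y) ∧ ∑ y, R x y = 1)
    (hDP : ∀ x y, Real.exp (-ε) * ρ y ≤ R x y ∧ R x y ≤ Real.exp ε * ρ y)
    (hDPr : ∀ x x' : X, ∀ y, R x y ≤ Real.exp εr * R x' y)
    (hsamp : ∀ y, ((univ.filter fun r : Fin t → Bool => R₀ r = y).card : ℝ) / 2 ^ t = ρ y)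
    (hβ : β < 1 / (2 * Real.exp ε))
    (hfool : ∀ x : X, ∀ θ ∈ Set.Icc (0 : ℝ) (Real.exp ε),
      |((univ.filter fun s : Fin ℓ → Bool =>
            θ ≤ R x (R₀ (G s)) / ρ (R₀ (G s))).card : ℝ) / 2 ^ ℓ -
        ((univ.filter fun r : Fin t → Bool =>
            θ ≤ R x (R₀ r) / ρ (R₀ r)).card : ℝ) / 2 ^ t| ≤ β) :
    ∀ (x x' : X) (s : Fin ℓ → Bool),
      (R x (R₀ (G s)) / ρ (R₀ (G s))) /
          (∑ s' : Fin ℓ → Bool, R x (R₀ (G s')) / ρ (R₀ (G s'))) ≤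
        Real.exp (εr + 4 * Real.exp ε * β) *
          ((R x' (R₀ (G s)) / ρ (R₀ (G s))) /
            (∑ s' : Fin ℓ → Bool, R x' (R₀ (G s')) / ρ (R₀ (G s')))) := by
  intro x x' s
  have hρ_pos (r : Fin t → Bool) : 0 < ρ (R₀ r) := by
    rw [← hsamp]
    exact div_pos (by exact_mod_cast card_pos.mpr ⟨r, by simp⟩) (by positivity)
  have hratio_mem (x : X) (r : Fin t → Bool) : R x (R₀ r) / ρ (R₀ r) ∈ Set.Icc 0 (Real.exp ε) :=
    ⟨div_nonneg ((hRpmf x).1 _) (hρ_pos r).le, (div_le_iff₀ (hρ_pos r)).mpr (hDP x _).2⟩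
  have hratio_sum (x : X) : ∑ r, R x (R₀ r) / ρ (R₀ r) = 2 ^ t := by
    have hR_zero (y : Y) (hy : ρ y = 0) : R x y = 0 :=
      le_antisymm (by simpa [hy] using (hDP x y).2) ((hRpmf x).1 y)
    rw [sum_comp_eq_mul_sum_of_card_fiber (f := fun y => R x y / ρ y) (by positivity) hsamp,
      sum_congr rfl fun y _ => mul_div_cancel_of_imp' (hR_zero y), (hRpmf x).2, mul_one]
  have hmean (x : X) :
      |(∑ s', R x (R₀ (G s')) / ρ (R₀ (G s'))) / 2 ^ ℓ - 1| ≤ Real.exp ε * β := by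
    have := abs_sum_div_sub_sum_div_le_of_tails (2 ^ ℓ) (2 ^ t) (Real.exp_pos ε).le
      (fun s' => hratio_mem x (G s')) (hratio_mem x) (hfool x)
    rwa [hratio_sum, div_self (by positivity)] at this
  have hc : Real.exp ε * β < 1 / 2 := by
    have := (lt_div_iff₀ (by positivity)).mp hβ
    linarith
  have hnum : R x (R₀ (G s)) / ρ (R₀ (G s)) ≤ Real.exp εr * (R x' (R₀ (G s)) / ρ (R₀ (G s))) := by
    rw [mul_div_assoc']
    exact div_le_div_of_nonneg_right (hDPr x x' _) (hρ_pos _).le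
  rw [Real.exp_add, mul_assoc 4]
  exact div_le_mul_exp_mul_div hnum (hratio_mem x' (G s)).1 (Real.exp_pos _).le (by positivity) hc
    (hmean x) (hmean x')

/-- **Compression preserves replacement DP.**
If `R` is deletion ε-DP with reference `ρ`, `t`-samplable via `R₀`, replacement ε_r-DP,
and `G` β-fools the density tests of `R` with `0 ≤ β < 1/(2e^ε)`, then the compressed
randomizer `R[G]` is replacement `(ε_r + 4e^ε β)`-DP. -/
theorem stmt_4 {X Y : Type*} [Fintype X] [Fintype Y] [Nonempty X] [Nonempty Y] [DecidableEq Y]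
    (R : X → Y → ℝ) (ρ : Y → ℝ) (ε εr β : ℝ) (t ℓ : ℕ)
    (R₀ : (Fin t → Bool) → Y) (G : (Fin ℓ → Bool) → Fin t → Bool)
    (hRpmf : ∀ x, (∀ y, 0 ≤ R x y) ∧ ∑ y, R x y = 1)
    (hρpmf : (∀ y, 0 ≤ ρ y) ∧ ∑ y, ρ y = 1)
    (hε : 0 < ε)
    (hDP : ∀ x y, Real.exp (-ε) * ρ y ≤ R x y ∧ R x y ≤ Real.exp ε * ρ y)
    (hDPr : ∀ x x' : X, ∀ y, R x y ≤ Real.exp εr * R x' y)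
    (hsamp : ∀ y, ((univ.filter fun r : Fin t → Bool => R₀ r = y).card : ℝ) / 2 ^ t = ρ y)
    (hβ0 : 0 ≤ β) (hβ : β < 1 / (2 * Real.exp ε))
    (hfool : ∀ x : X, ∀ θ ∈ Set.Icc (0 : ℝ) (Real.exp ε),
      |((univ.filter fun s : Fin ℓ → Bool =>
            θ ≤ R x (R₀ (G s)) / ρ (R₀ (G s))).card : ℝ) / 2 ^ ℓ -
        ((univ.filter fun r : Fin t → Bool =>
            θ ≤ R x (R₀ r) / ρ (R₀ r)).card : ℝ) / 2 ^ t| ≤ β) :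
    ∀ (x x' : X) (s : Fin ℓ → Bool),
      (R x (R₀ (G s)) / ρ (R₀ (G s))) /
          (∑ s' : Fin ℓ → Bool, R x (R₀ (G s')) / ρ (R₀ (G s'))) ≤
        Real.exp (εr + 4 * Real.exp ε * β) *
          ((R x' (R₀ (G s)) / ρ (R₀ (G s))) /
            (∑ s' : Fin ℓ → Bool, R x' (R₀ (G s')) / ρ (R₀ (G s')))) :=
  stmt_4_general R ρ ε εr β t ℓ R₀ G hRpmf hDP hDPr hsamp hβ hfool
end

section
/- Suppose R : X → PMF(Y) is a deletion (ε, δ)-DP local randomizer with reference distribution ρ, t-samplable via R_∅ : {0,1}^t → Y, and G : {0,1}^ℓ → {0,1}^t β-fools the density tests of R, where β ≥ 0, δ ≥ 0 and δ + e^ε·β < 1/2. Define the truncated compressed randomizer R̃[G](x)(s) := π̃_x(R_∅(G(s))) / Σ_{s' ∈ {0,1}^ℓ} π̃_x(R_∅(G(s'))). Then for every x ∈ X, the PMF R̃[G](x) and the uniform PMF on {0,1}^ℓ are (ε + 2δ + 2·e^ε·β, δ + β)-close; in particular R̃[G] is a deletion (ε + 2δ + 2·e^ε·β, δ + β)-DP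 local randomizer. -/
/-!
Write `π̃ = min π e^ε` and `S = ∑ₛ π̃ (R₀ (G s))`. By the layer-cake formula
`∑ min f a = ∫₀^a #{θ ≤ f} dθ`, fooling every threshold test in `[0, a]` moves the normalized
sum of `min π a` by at most `a β`, and over true samples that normalized sum is
`∑ʸ min (R x y) (a ρ y)`. For `a = e^ε` this puts `S / 2^ℓ` within `e^ε β` of `1 - T` with
`0 ≤ T ≤ δ`, hence in `[e^{-2c}, e^{2c}]` for `c = δ + e^ε β < 1/2`. Since `π̃ ≤ e^ε`, the first
inequality holds with every term zero. For the second, `π̃ ≥ min π e^{-ε}`, whose normalized sum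
is (fooling again, with `a = e^{-ε}`) within `e^{-ε} β` of
`∑ʸ min (R x y) (e^{-ε} ρ y) = e^{-ε} (1 - ∑ʸ max (ρ y - e^ε R x y) 0)`.
-/

open Finset MeasureTheory Real
open Set (Icc Ioc Iic indicator)

section LayerCake

variable {ι κ : Type*} [Fintype ι] [Fintype κ]

theorem card_filter_le_eq_sum_indicator (f : ι → ℝ) (θ : ℝ) :
    (#{i | θ ≤ f i} : ℝ) = ∑ i, (Iic (f i)).indicator 1 θ := by
  rw [card_filter]
  push_cast
  simp only [Set.indicator_apply, Set.mem_Iic, Pi.one_apply]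

theorem integrableOn_Ioc_indicator_Iic_s7 (w a : ℝ) :
    IntegrableOn ((Iic w).indicator (1 : ℝ → ℝ)) (Ioc 0 a) :=
  (integrableOn_const measure_Ioc_lt_top.ne).indicator measurableSet_Iic

theorem integrableOn_card_filter_le (f : ι → ℝ) (a : ℝ) :
    IntegrableOn (fun θ => (#{i | θ ≤ f i} : ℝ)) (Ioc 0 a) := by
  simp only [card_filter_le_eq_sum_indicator]
  exact integrable_finsetSum _ fun i _ => integrableOn_Ioc_indicator_Iic_s7 (f i) a

theorem setIntegral_Ioc_indicator_Iic_s7 {w a : ℝ} (hw : 0 ≤ w) (ha : 0 ≤ a) :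
    ∫ θ in Ioc 0 a, (Iic w).indicator 1 θ = min w a := by
  rw [setIntegral_indicator measurableSet_Iic, Set.Ioc_inter_Iic, Pi.one_def, setIntegral_const,
    volume_real_Ioc_of_le (le_min ha hw), smul_eq_mul, mul_one, sub_zero, min_comm]

theorem sum_min_eq_integral_card_filter_le {f : ι → ℝ} (hf : ∀ i, 0 ≤ f i) {a : ℝ}
    (ha : 0 ≤ a) : ∑ i, min (f i) a = ∫ θ in Ioc 0 a, (#{i | θ ≤ f i} : ℝ) := by
  simp only [card_filter_le_eq_sum_indicator]
  rw [integral_finsetSum _ fun i _ => integrableOn_Ioc_indicator_Iic_s7 (f i) a]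
  exact sum_congr rfl fun i _ => (setIntegral_Ioc_indicator_Iic_s7 (hf i) ha).symm

theorem abs_sum_min_div_sub_sum_min_div_le {f : ι → ℝ} {g : κ → ℝ} (hf : ∀ i, 0 ≤ f i)
    (hg : ∀ k, 0 ≤ g k) {a β m n : ℝ} (ha : 0 ≤ a)
    (hfool : ∀ θ ∈ Ioc 0 a, |(#{i | θ ≤ f i} : ℝ) / m - (#{k | θ ≤ g k} : ℝ) / n| ≤ β) :
    |(∑ i, min (f i) a) / m - (∑ k, min (g k) a) / n| ≤ a * β := by
  rw [sum_min_eq_integral_card_filter_le hf ha, sum_min_eq_integral_card_filter_le hg ha,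
    ← integral_div, ← integral_div, ← integral_sub ((integrableOn_card_filter_le f a).div_const m)
      ((integrableOn_card_filter_le g a).div_const n), ← Real.norm_eq_abs]
  calc _ ≤ β * volume.real (Ioc 0 a) :=
        norm_setIntegral_le_of_norm_le_const measure_Ioc_lt_top hfool
    _ = a * β := by rw [volume_real_Ioc_of_le ha, sub_zero, mul_comm]

end LayerCake

section DensityRatio

variable {Ω Y : Type*} [Fintype Ω] [Fintype Y]

theorem mul_min_div_self {r ρ : ℝ} (hr : 0 ≤ r) (hρ : 0 ≤ ρ) (a : ℝ) :
    ρ * min (r / ρ) a = min r (a * ρ) := by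
  rcases hρ.eq_or_lt with rfl | hρ
  · simp [hr]
  · rw [mul_min_of_nonneg _ _ hρ.le, mul_div_cancel₀ _ hρ.ne', mul_comm]

theorem min_mul_div_self {a ρ : ℝ} (ha : 0 ≤ a) (hρ : 0 ≤ ρ) (r : ℝ) :
    min r (a * ρ) / ρ = min (r / ρ) a := by
  rcases hρ.eq_or_lt with rfl | hρ
  · simp [ha]
  · rw [← min_div_div_right hρ.le, mul_div_cancel_right₀ _ hρ.ne']

theorem sum_min_eq_one_sub_sum_max {μ : Y → ℝ} (hμ : ∑ y, μ y = 1) (ν : Y → ℝ) :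
    ∑ y, min (μ y) (ν y) = 1 - ∑ y, max (μ y - ν y) 0 := by
  rw [← hμ, ← sum_sub_distrib]
  refine sum_congr rfl fun y _ => ?_
  rcases le_total (μ y) (ν y) with h | h
  · rw [min_eq_left h, max_eq_right (by linarith), sub_zero]
  · rw [min_eq_right h, max_eq_left (by linarith), sub_sub_cancel]

theorem one_sub_exp_mul_sum_min_exp_neg {ρ : Y → ℝ} (hρ : ∑ y, ρ y = 1) (μ : Y → ℝ) (ε : ℝ) :
    1 - exp ε * ∑ y, min (μ y) (exp (-ε) * ρ y) = ∑ y, max (ρ y - exp ε * μ y) 0 := by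
  have h : ∀ y, exp ε * min (μ y) (exp (-ε) * ρ y) = min (ρ y) (exp ε * μ y) := fun y => by
    rw [mul_min_of_nonneg _ _ (exp_pos ε).le, ← mul_assoc, ← exp_add, add_neg_cancel, exp_zero,
      one_mul, min_comm]
  rw [mul_sum, sum_congr rfl fun y _ => h y, sum_min_eq_one_sub_sum_max hρ, sub_sub_cancel]

theorem one_sub_exp_mul_le_sum_max_add {ρ : Y → ℝ} (hρ : ∑ y, ρ y = 1) (μ : Y → ℝ)
    {ε β V : ℝ} (hV : |V - ∑ y, min (μ y) (exp (-ε) * ρ y)| ≤ exp (-ε) * β) :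
    1 - exp ε * V ≤ ∑ y, max (ρ y - exp ε * μ y) 0 + β := by
  have hinv : exp ε * exp (-ε) = 1 := by rw [← exp_add, add_neg_cancel, exp_zero]
  rw [← one_sub_exp_mul_sum_min_exp_neg hρ μ ε]
  have h := mul_le_mul_of_nonneg_left (abs_le.1 hV).1 (exp_pos ε).le
  linear_combination h + β * hinv

variable [DecidableEq Y]

theorem sum_comp_div_eq_sum_mul {R₀ : Ω → Y} {ρ : Y → ℝ} {n : ℝ}
    (hsamp : ∀ y, (#{r | R₀ r = y} : ℝ) / n = ρ y) (φ : Y → ℝ) :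
    (∑ r, φ (R₀ r)) / n = ∑ y, ρ y * φ y := by
  rw [← sum_fiberwise univ R₀, sum_div]
  refine sum_congr rfl fun y _ => ?_
  rw [sum_congr rfl fun r hr => congrArg φ (mem_filter.1 hr).2, sum_const, nsmul_eq_mul,
    mul_div_right_comm, hsamp]

theorem abs_sum_min_div_sub_sum_min_le {ι : Type*} [Fintype ι] {μ ρ : Y → ℝ} {R₀ : Ω → Y}
    {f : ι → ℝ} {a β m n : ℝ} (hμ : ∀ y, 0 ≤ μ y) (hρ : ∀ y, 0 ≤ ρ y) (hf : ∀ i, 0 ≤ f i)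
    (ha : 0 ≤ a) (hsamp : ∀ y, (#{r | R₀ r = y} : ℝ) / n = ρ y)
    (hfool : ∀ θ ∈ Ioc 0 a,
      |(#{i | θ ≤ f i} : ℝ) / m - (#{r | θ ≤ μ (R₀ r) / ρ (R₀ r)} : ℝ) / n| ≤ β) :
    |(∑ i, min (f i) a) / m - ∑ y, min (μ y) (a * ρ y)| ≤ a * β := by
  have hsampled : (∑ r, min (μ (R₀ r) / ρ (R₀ r)) a) / n = ∑ y, min (μ y) (a * ρ y) := by
    rw [sum_comp_div_eq_sum_mul hsamp fun y => min (μ y / ρ y) a]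
    exact sum_congr rfl fun y _ => mul_min_div_self (hμ y) (hρ y) a
  rw [← hsampled]
  exact abs_sum_min_div_sub_sum_min_div_le hf (fun r => div_nonneg (hμ _) (hρ _)) ha hfool

end DensityRatio

section NormalizedWeights

variable {ι : Type*} [Fintype ι]

theorem sum_max_div_sum_sub_eq_zero {w : ι → ℝ} {ε γ N : ℝ} (hw : ∀ i, w i ≤ exp ε)
    (hN : 0 < N) (hS : exp (-γ) ≤ (∑ i, w i) / N) :
    ∑ i, max (w i / ∑ j, w j - exp (ε + γ) * N⁻¹) 0 = 0 := by
  rw [le_div_iff₀ hN] at hS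
  have hS₀ : 0 < ∑ i, w i := (mul_pos (exp_pos _) hN).trans_le hS
  refine sum_eq_zero fun i _ => max_eq_right (sub_nonpos.2 ?_)
  calc w i / ∑ j, w j ≤ exp ε / (exp (-γ) * N) :=
        div_le_div₀ (exp_pos ε).le (hw i) (mul_pos (exp_pos _) hN) hS
    _ = exp (ε + γ) * N⁻¹ := by rw [exp_add, exp_neg]; field_simp

theorem sum_max_inv_sub_mul_div_sum_le {w v : ι → ℝ} {ε γ N : ℝ}
    (hN : (Fintype.card ι : ℝ) = N) (hv : ∀ i, 0 ≤ v i) (hvw : ∀ i, v i ≤ w i)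
    (hv₁ : ∀ i, exp ε * v i ≤ 1) (hN₀ : 0 < N) (hS₀ : 0 < ∑ i, w i)
    (hS : (∑ i, w i) / N ≤ exp γ) :
    ∑ i, max (N⁻¹ - exp (ε + γ) * (w i / ∑ j, w j)) 0 ≤ 1 - exp ε * ((∑ i, v i) / N) := by
  rw [div_le_iff₀ hN₀] at hS
  have hterm : ∀ i, exp ε * v i / N ≤ exp (ε + γ) * (w i / ∑ j, w j) := fun i => by
    have hw : 0 ≤ w i := (hv i).trans (hvw i)
    calc exp ε * v i / N ≤ exp ε * w i / N := by gcongr; exact hvw i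
      _ = exp ε * (w i / (exp γ * N)) * exp γ := by field_simp
      _ ≤ exp ε * (w i / ∑ j, w j) * exp γ := by gcongr
      _ = exp (ε + γ) * (w i / ∑ j, w j) := by rw [exp_add]; ring
  calc ∑ i, max (N⁻¹ - exp (ε + γ) * (w i / ∑ j, w j)) 0
      ≤ ∑ i, (N⁻¹ - exp ε * v i / N) := by
        refine sum_le_sum fun i _ => max_le (by linarith [hterm i]) ?_
        rw [← one_div, div_sub_div_same]
        exact div_nonneg (by linarith [hv₁ i]) hN₀.le
    _ = 1 - exp ε * ((∑ i, v i) / N) := by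
        rw [sum_sub_distrib, sum_const, card_univ, nsmul_eq_mul, hN, ← sum_div, ← mul_sum]
        field_simp

end NormalizedWeights

theorem exp_neg_two_mul_le_one_sub {c : ℝ} (hc₀ : 0 ≤ c) (hc : c ≤ 1 / 2) :
    exp (-(2 * c)) ≤ 1 - c := by
  rw [exp_neg, inv_le_comm₀ (exp_pos _) (by linarith)]
  calc (1 - c)⁻¹ ≤ 1 + 2 * c := by
        rw [inv_le_iff_one_le_mul₀ (by linarith)]
        nlinarith
    _ ≤ exp (2 * c) := by linarith [add_one_le_exp (2 * c)]

theorem mem_Icc_exp_of_abs_sub_one_sub_le {M T δ b : ℝ} (hT₀ : 0 ≤ T) (hT : T ≤ δ) (hb : 0 ≤ b)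
    (hsmall : δ + b < 1 / 2) (hM : |M - (1 - T)| ≤ b) :
    M ∈ Icc (exp (-(2 * (δ + b)))) (exp (2 * (δ + b))) := by
  obtain ⟨hlo, hhi⟩ := abs_le.1 hM
  constructor
  · linarith [exp_neg_two_mul_le_one_sub (c := δ + b) (by linarith) hsmall.le]
  · linarith [add_one_le_exp (2 * (δ + b))]

theorem stmt_7_general {X Y : Type*} [Fintype Y] [DecidableEq Y]
    (R : X → Y → ℝ) (ρ : Y → ℝ) (ε δ β : ℝ) (t ℓ : ℕ)
    (R₀ : (Fin t → Bool) → Y) (G : (Fin ℓ → Bool) → Fin t → Bool)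
    (hRpmf : ∀ x, (∀ y, 0 ≤ R x y) ∧ ∑ y, R x y = 1)
    (hρpmf : (∀ y, 0 ≤ ρ y) ∧ ∑ y, ρ y = 1)
    (hε : 0 ≤ ε) (hδ : 0 ≤ δ) (hβ0 : 0 ≤ β)
    (hsmall : δ + Real.exp ε * β < 1 / 2)
    (hDP : ∀ x, (∑ y, max (R x y - Real.exp ε * ρ y) 0 ≤ δ) ∧
      (∑ y, max (ρ y - Real.exp ε * R x y) 0 ≤ δ))
    (hsamp : ∀ y, ((univ.filter fun r : Fin t → Bool => R₀ r = y).card : ℝ) / 2 ^ t = ρ y)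
    (hfool : ∀ x : X, ∀ θ ∈ Set.Icc (0 : ℝ) (Real.exp ε),
      |((univ.filter fun s : Fin ℓ → Bool =>
            θ ≤ R x (R₀ (G s)) / ρ (R₀ (G s))).card : ℝ) / 2 ^ ℓ -
        ((univ.filter fun r : Fin t → Bool =>
            θ ≤ R x (R₀ r) / ρ (R₀ r)).card : ℝ) / 2 ^ t| ≤ β) :
    ∀ x : X,
      (∑ s : Fin ℓ → Bool,
        max ((min (R x (R₀ (G s))) (Real.exp ε * ρ (R₀ (G s))) / ρ (R₀ (G s))) /
            (∑ s' : Fin ℓ → Bool,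
              min (R x (R₀ (G s'))) (Real.exp ε * ρ (R₀ (G s'))) / ρ (R₀ (G s'))) -
          Real.exp (ε + 2 * δ + 2 * Real.exp ε * β) * ((2 : ℝ) ^ ℓ)⁻¹) 0) ≤ δ + β ∧
      (∑ s : Fin ℓ → Bool,
        max (((2 : ℝ) ^ ℓ)⁻¹ -
          Real.exp (ε + 2 * δ + 2 * Real.exp ε * β) *
            ((min (R x (R₀ (G s))) (Real.exp ε * ρ (R₀ (G s))) / ρ (R₀ (G s))) /
              (∑ s' : Fin ℓ → Bool,
                min (R x (R₀ (G s'))) (Real.exp ε * ρ (R₀ (G s'))) / ρ (R₀ (G s'))))) 0) ≤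
        δ + β := by
  intro x
  obtain ⟨hR₀, hR₁⟩ := hRpmf x
  obtain ⟨hρ₀, hρ₁⟩ := hρpmf
  obtain ⟨hDP₁, hDP₂⟩ := hDP x
  have hN : (0 : ℝ) < 2 ^ ℓ := by positivity
  have hε' : exp (-ε) ≤ exp ε := exp_le_exp.2 (by linarith)
  have hmass : ∀ a, 0 ≤ a → a ≤ exp ε →
      |(∑ s, min (R x (R₀ (G s)) / ρ (R₀ (G s))) a) / 2 ^ ℓ - ∑ y, min (R x y) (a * ρ y)|
        ≤ a * β := fun a ha₀ ha =>
    abs_sum_min_div_sub_sum_min_le hR₀ hρ₀ (fun s => div_nonneg (hR₀ _) (hρ₀ _)) ha₀ hsamp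
      fun θ hθ => hfool x θ ⟨hθ.1.le, hθ.2.trans ha⟩
  obtain ⟨hS_lower, hS_upper⟩ := mem_Icc_exp_of_abs_sub_one_sub_le
    (sum_nonneg fun y _ => le_max_right _ _) hDP₁ (by positivity) hsmall
    (sum_min_eq_one_sub_sum_max hR₁ _ ▸ hmass _ (exp_pos ε).le le_rfl)
  have hS₀ := (div_pos_iff_of_pos_right hN).1 ((exp_pos _).trans_le hS_lower)
  simp only [min_mul_div_self (exp_pos ε).le (hρ₀ _)]
  rw [show ε + 2 * δ + 2 * exp ε * β = ε + 2 * (δ + exp ε * β) by ring]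
  refine ⟨(sum_max_div_sum_sub_eq_zero (fun s => min_le_right _ _) hN hS_lower).le.trans
    (by positivity), ?_⟩
  refine (sum_max_inv_sub_mul_div_sum_le (by simp) (fun s => le_min (div_nonneg (hR₀ _) (hρ₀ _))
    (exp_pos _).le) (fun s => min_le_min_left _ hε') (fun s => ?_) hN hS₀ hS_upper).trans
    ((one_sub_exp_mul_le_sum_max_add hρ₁ (R x) (hmass _ (exp_pos _).le hε')).trans
      (by linarith))
  calc exp ε * min _ (exp (-ε)) ≤ exp ε * exp (-ε) := by gcongr; exact min_le_right _ _
    _ = 1 := by rw [← exp_add, add_neg_cancel, exp_zero]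

/-- **The truncated compressed randomizer of a deletion (ε,δ)-DP randomizer is deletion
(ε + 2δ + 2e^ε β, δ + β)-DP.** With `π̃_x(y) = min(R(x)(y), e^ε ρ(y))/ρ(y)` and
`R̃[G](x)(s) = π̃_x(R₀(G s)) / ∑_{s'} π̃_x(R₀(G s'))`, for every `x` the PMF `R̃[G](x)`
and the uniform PMF on `{0,1}^ℓ` are `(ε + 2δ + 2e^ε β, δ + β)`-close. -/
theorem stmt_7 {X Y : Type*} [Fintype X] [Fintype Y] [Nonempty X] [Nonempty Y] [DecidableEq Y]
    (R : X → Y → ℝ) (ρ : Y → ℝ) (ε δ β : ℝ) (t ℓ : ℕ)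
    (R₀ : (Fin t → Bool) → Y) (G : (Fin ℓ → Bool) → Fin t → Bool)
    (hRpmf : ∀ x, (∀ y, 0 ≤ R x y) ∧ ∑ y, R x y = 1)
    (hρpmf : (∀ y, 0 ≤ ρ y) ∧ ∑ y, ρ y = 1)
    (hε : 0 ≤ ε) (hδ : 0 ≤ δ) (hβ0 : 0 ≤ β)
    (hsmall : δ + Real.exp ε * β < 1 / 2)
    (hDP : ∀ x, (∑ y, max (R x y - Real.exp ε * ρ y) 0 ≤ δ) ∧
      (∑ y, max (ρ y - Real.exp ε * R x y) 0 ≤ δ))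
    (hsamp : ∀ y, ((univ.filter fun r : Fin t → Bool => R₀ r = y).card : ℝ) / 2 ^ t = ρ y)
    (hfool : ∀ x : X, ∀ θ ∈ Set.Icc (0 : ℝ) (Real.exp ε),
      |((univ.filter fun s : Fin ℓ → Bool =>
            θ ≤ R x (R₀ (G s)) / ρ (R₀ (G s))).card : ℝ) / 2 ^ ℓ -
        ((univ.filter fun r : Fin t → Bool =>
            θ ≤ R x (R₀ r) / ρ (R₀ r)).card : ℝ) / 2 ^ t| ≤ β) :
    ∀ x : X,
      (∑ s : Fin ℓ → Bool,
        max ((min (R x (R₀ (G s))) (Real.exp ε * ρ (R₀ (G s))) / ρ (R₀ (G s))) /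
            (∑ s' : Fin ℓ → Bool,
              min (R x (R₀ (G s'))) (Real.exp ε * ρ (R₀ (G s'))) / ρ (R₀ (G s'))) -
          Real.exp (ε + 2 * δ + 2 * Real.exp ε * β) * ((2 : ℝ) ^ ℓ)⁻¹) 0) ≤ δ + β ∧
      (∑ s : Fin ℓ → Bool,
        max (((2 : ℝ) ^ ℓ)⁻¹ -
          Real.exp (ε + 2 * δ + 2 * Real.exp ε * β) *
            ((min (R x (R₀ (G s))) (Real.exp ε * ρ (R₀ (G s))) / ρ (R₀ (G s))) /
              (∑ s' : Fin ℓ → Bool,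
                min (R x (R₀ (G s'))) (Real.exp ε * ρ (R₀ (G s'))) / ρ (R₀ (G s'))))) 0) ≤
        δ + β :=
  stmt_7_general R ρ ε δ β t ℓ R₀ G hRpmf hρpmf hε hδ hβ0 hsmall hDP hsamp hfool
end

section
/- Suppose R : X → PMF(Y) is a deletion (ε, δ)-DP local randomizer with reference distribution ρ, where 0 ≤ δ < 1. Fix x ∈ X, let ν̃_x(y) := min(R(x)(y), e^ε·ρ(y)), and let ν̄_x be the normalization ν̄_x(y) := ν̃_x(y)/Σ_{y'} ν̃_x(y') (well defined since Σ ν̃_x ≥ 1 − δ > 0). Then: (i) the total variation distance satisfies (1/2)·Σ_{y ∈ Y} |R(x)(y) − ν̄_x(y)| ≤ δ, and (ii) the per-trial acceptance probability of truncated rejection sampling satisfies Σ_{y ∈ Y} min(ρ(y), R(x)(y)/e^ε) ≥ (1 − δ)·e^{-ε}. -/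
open Finset

/-- **Truncated rejection sampling for a deletion (ε,δ)-DP randomizer.**
Let `ν̃_x(y) = min(R(x)(y), e^ε ρ(y))` and `ν̄_x` its normalization. Then
(i) the total variation distance between `R(x)` and `ν̄_x` is at most `δ`, and
(ii) the per-trial acceptance probability of truncated rejection sampling is at least
`(1 − δ)·e^{-ε}`. -/
theorem stmt_8 {X Y : Type*} [Fintype Y] [Nonempty Y]
    (R : X → Y → ℝ) (ρ : Y → ℝ) (ε δ : ℝ) (hε : 0 ≤ ε) (hδ0 : 0 ≤ δ) (hδ1 : δ < 1)
    (hRpmf : ∀ x, (∀ y, 0 ≤ R x y) ∧ ∑ y, R x y = 1)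
    (hρpmf : (∀ y, 0 ≤ ρ y) ∧ ∑ y, ρ y = 1)
    (hDP : ∀ x, (∑ y, max (R x y - Real.exp ε * ρ y) 0 ≤ δ) ∧
      (∑ y, max (ρ y - Real.exp ε * R x y) 0 ≤ δ))
    (x : X) :
    (1 / 2) * ∑ y, |R x y -
        min (R x y) (Real.exp ε * ρ y) / ∑ y', min (R x y') (Real.exp ε * ρ y')| ≤ δ ∧
    (1 - δ) * Real.exp (-ε) ≤ ∑ y, min (ρ y) (R x y / Real.exp ε) := by
  obtain ⟨hRnn, hRsum⟩ := hRpmf x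
  obtain ⟨hρnn, hρsum⟩ := hρpmf
  obtain ⟨hDP1, hDP2⟩ := hDP x
  have hE : (0:ℝ) < Real.exp ε := Real.exp_pos ε
  set S : ℝ := ∑ y', min (R x y') (Real.exp ε * ρ y') with hS
  have hmin : ∀ y, min (R x y) (Real.exp ε * ρ y)
      = R x y - max (R x y - Real.exp ε * ρ y) 0 := by
    intro y
    rcases le_total (R x y) (Real.exp ε * ρ y) with h | h
    · rw [min_eq_left h, max_eq_right (by linarith)]; ring
    · rw [min_eq_right h, max_eq_left (by linarith)]; ring
  have hSeq : S = 1 - ∑ y, max (R x y - Real.exp ε * ρ y) 0 := by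
    rw [hS]; simp_rw [hmin]; rw [Finset.sum_sub_distrib, hRsum]
  have hmaxnn : (0:ℝ) ≤ ∑ y, max (R x y - Real.exp ε * ρ y) 0 :=
    Finset.sum_nonneg fun y _ => le_max_right _ _
  have hS1 : 1 - δ ≤ S := by rw [hSeq]; linarith
  have hSle1 : S ≤ 1 := by rw [hSeq]; linarith
  have hSpos : (0:ℝ) < S := by linarith
  have hνnn : ∀ y, 0 ≤ min (R x y) (Real.exp ε * ρ y) := fun y =>
    le_min (hRnn y) (mul_nonneg hE.le (hρnn y))
  constructor
  · have hbound : ∀ y ∈ (Finset.univ : Finset Y),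
        |R x y - min (R x y) (Real.exp ε * ρ y) / S| ≤
        max (R x y - Real.exp ε * ρ y) 0
          + min (R x y) (Real.exp ε * ρ y) * (1/S - 1) := by
      intro y _
      have h1 : |R x y - min (R x y) (Real.exp ε * ρ y)|
          = max (R x y - Real.exp ε * ρ y) 0 := by
        rw [show R x y - min (R x y) (Real.exp ε * ρ y)
            = max (R x y - Real.exp ε * ρ y) 0 by linarith [hmin y]]
        exact abs_of_nonneg (le_max_right _ _)
      have h2 : |min (R x y) (Real.exp ε * ρ y) - min (R x y) (Real.exp ε * ρ y) / S|
          = min (R x y) (Real.exp ε * ρ y) * (1/S - 1) := by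
        have : min (R x y) (Real.exp ε * ρ y) - min (R x y) (Real.exp ε * ρ y) / S
            = - (min (R x y) (Real.exp ε * ρ y) * (1/S - 1)) := by
          field_simp
          ring
        rw [this, abs_neg, abs_of_nonneg]
        apply mul_nonneg (hνnn y)
        have : (1:ℝ) ≤ 1/S := (le_div_iff₀ hSpos).mpr (by linarith)
        linarith
      calc |R x y - min (R x y) (Real.exp ε * ρ y) / S|
          ≤ |R x y - min (R x y) (Real.exp ε * ρ y)|
            + |min (R x y) (Real.exp ε * ρ y) - min (R x y) (Real.exp ε * ρ y) / S| :=
            abs_sub_le _ _ _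
        _ = _ := by rw [h1, h2]
    have hsum : ∑ y, |R x y - min (R x y) (Real.exp ε * ρ y) / S|
        ≤ ∑ y, (max (R x y - Real.exp ε * ρ y) 0
          + min (R x y) (Real.exp ε * ρ y) * (1/S - 1)) :=
      Finset.sum_le_sum hbound
    have hsplit : ∑ y, (max (R x y - Real.exp ε * ρ y) 0
          + min (R x y) (Real.exp ε * ρ y) * (1/S - 1))
        = (1 - S) + S * (1/S - 1) := by
      rw [Finset.sum_add_distrib, ← Finset.sum_mul, ← hS]
      have : ∑ y, max (R x y - Real.exp ε * ρ y) 0 = 1 - S := by rw [hSeq]; ring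
      rw [this]
    have hfin : S * (1/S - 1) = 1 - S := by field_simp
    have : ∑ y, |R x y - min (R x y) (Real.exp ε * ρ y) / S| ≤ 2 * (1 - S) := by
      rw [hsplit, hfin] at hsum; linarith
    linarith
  · have hrw : ∀ y, min (ρ y) (R x y / Real.exp ε)
        = min (R x y) (Real.exp ε * ρ y) / Real.exp ε := by
      intro y
      rcases le_total (R x y) (Real.exp ε * ρ y) with h | h
      · rw [min_eq_left h, min_eq_right]
        rw [div_le_iff₀ hE]
        nlinarith
      · rw [min_eq_right h, min_eq_left]
        · field_simp
        · rw [le_div_iff₀ hE]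
          nlinarith
    simp_rw [hrw]
    rw [← Finset.sum_div, ← hS, Real.exp_neg, div_eq_mul_inv]
    have : (0:ℝ) ≤ (Real.exp ε)⁻¹ := by positivity
    nlinarith
end

section
/- Let R : X → PMF(Y) be a replacement (ε_r, δ_r)-DP local randomizer, i.e. for all x, x' ∈ X, Σ_{y ∈ Y} max(R(x)(y) − e^{ε_r}·R(x')(y), 0) ≤ δ_r, with ε_r ≥ 0. Let ρ be any PMF on Y and ε ≥ 0, and define the truncation ν̃_x(y) := min(R(x)(y), e^ε·ρ(y)). Then the truncations remain (ε_r, δ_r)-close on one side: for all x, x' ∈ X, Σ_{y ∈ Y} max(ν̃_x(y) − e^{ε_r}·ν̃_{x'}(y), 0) ≤ δ_r. -/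
open Finset

/-- **Truncation preserves one side of replacement (ε_r, δ_r)-closeness.**
If `R` is replacement (ε_r, δ_r)-DP with `ε_r ≥ 0`, `ρ` is any PMF and `ε ≥ 0`, then the
truncations `ν̃_x(y) = min(R(x)(y), e^ε ρ(y))` satisfy
`∑_y max(ν̃_x(y) − e^{ε_r} ν̃_{x'}(y), 0) ≤ δ_r` for all `x, x'`. -/
theorem stmt_9 {X Y : Type*} [Fintype Y] [Nonempty Y]
    (R : X → Y → ℝ) (εr δr ε : ℝ) (hεr : 0 ≤ εr) (hε : 0 ≤ ε)
    (hRpmf : ∀ x, (∀ y, 0 ≤ R x y) ∧ ∑ y, R x y = 1)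
    (hDPr : ∀ x x' : X, ∑ y, max (R x y - Real.exp εr * R x' y) 0 ≤ δr)
    (ρ : Y → ℝ) (hρpmf : (∀ y, 0 ≤ ρ y) ∧ ∑ y, ρ y = 1) :
    ∀ x x' : X,
      ∑ y, max (min (R x y) (Real.exp ε * ρ y) -
        Real.exp εr * min (R x' y) (Real.exp ε * ρ y)) 0 ≤ δr := by
  intro x x'
  refine le_trans (Finset.sum_le_sum fun y _ => ?_) (hDPr x x')
  have h1 : (1 : ℝ) ≤ Real.exp εr := by
    simpa using Real.exp_le_exp.2 hεr
  rcases le_or_gt (R x' y) (Real.exp ε * ρ y) with h | h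
  · rw [min_eq_left h]
    exact max_le_max (by nlinarith [min_le_left (R x y) (Real.exp ε * ρ y)]) le_rfl
  · rw [min_eq_right h.le]
    have hc : 0 ≤ Real.exp ε * ρ y :=
      mul_nonneg (Real.exp_pos ε).le (hρpmf.1 y)
    have : min (R x y) (Real.exp ε * ρ y) - Real.exp εr * (Real.exp ε * ρ y) ≤ 0 := by
      nlinarith [min_le_right (R x y) (Real.exp ε * ρ y)]
    calc max (min (R x y) (Real.exp ε * ρ y) - Real.exp εr * (Real.exp ε * ρ y)) 0 = 0 :=
          max_eq_right this
      _ ≤ _ := le_max_right _ _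
end

section
/- Suppose R : X → PMF(Y) is a replacement (ε_r, δ_r)-DP and deletion (ε, δ)-DP local randomizer with reference distribution ρ, t-samplable via R_∅ : {0,1}^t → Y. Suppose G : {0,1}^ℓ → {0,1}^t β-fools both the density tests of R and the difference tests of R, where β ≥ 0, δ ≥ 0 and δ + e^ε·β < 1/2. Then for all x, x' ∈ X, the truncated compressed randomizer R̃[G] satisfies Σ_{s ∈ {0,1}^ℓ} max(R̃[G](x)(s) − e^{ε_r + 2δ + 3·e^ε·β}·R̃[G](x')(s), 0) ≤ 2·(δ_r + e^ε·β); in particular R̃[G] is a replacement (ε_r + 2δ + 3·e^ε·β, 2δ_r + 2·e^ε·β)-DP local randomizer. -/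
/-!
Truncated density ratios take values in `[0, e^ε]`, so by the layer-cake formula the average
of such a ratio over seeds is the integral over `θ ∈ [0, e^ε]` of its tail frequency; fooling
every threshold test therefore moves such averages by at most `e^ε β`. Over true samples the
normalizer of `π̃_x` has mean `∑ min(R x, e^ε ρ) ∈ [1 - δ, 1]` and the positive part of
`π̃_x - e^{ε_r} π̃_{x'}` has mean at most `δ_r`. Under `G` the normalizers thus lie in
`[1 - δ - e^ε β, 1 + e^ε β] · 2^ℓ`; their ratio is absorbed by `e^{2δ + 3 e^ε β}` because
`e^{2u} (1 - u) ≥ 1` for `0 ≤ u ≤ 1/2`, and dividing the difference mass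
`≤ (δ_r + e^ε β) 2^ℓ` by a normalizer `≥ 2^ℓ / 2` costs the factor `2`.
-/

open Finset MeasureTheory

section LayerCake

variable {S T : Type*} [Fintype S] [Fintype T]

lemma antitone_card_filter_le_s10 (F : S → ℝ) :
    Antitone fun θ : ℝ => ((univ.filter fun s => θ ≤ F s).card : ℝ) := by
  intro θ₁ θ₂ h
  dsimp only
  exact_mod_cast card_le_card (monotone_filter_right _ fun s _ hs => h.trans hs)

lemma sum_eq_integral_card_filter_le (F : S → ℝ) {M : ℝ} (hF : ∀ s, F s ∈ Set.Icc 0 M) :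
    ∑ s, F s = ∫ θ in (0 : ℝ)..M, ((univ.filter fun s => θ ≤ F s).card : ℝ) := by
  have hcard : ∀ θ : ℝ, ((univ.filter fun s => θ ≤ F s).card : ℝ) =
      ∑ s, Set.indicator (Set.Iic (F s)) (fun _ => (1 : ℝ)) θ := fun θ => by
    simp [Set.indicator_apply, sum_boole]
  simp_rw [hcard]
  rw [intervalIntegral.integral_finsetSum fun s _ => intervalIntegrable_iff.2
    ((integrableOn_const (C := (1 : ℝ))
      (by rw [Set.uIoc]; exact measure_Ioc_lt_top.ne)).indicator measurableSet_Iic)]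
  exact sum_congr rfl fun s _ =>
    ((intervalIntegral.integral_indicator (hF s)).trans (by simp)).symm

lemma abs_sum_div_sub_sum_div_le_of_tails_s10 (F : S → ℝ) (H : T → ℝ) {M β a b : ℝ}
    (hM : 0 ≤ M) (hF : ∀ s, F s ∈ Set.Icc 0 M) (hH : ∀ r, H r ∈ Set.Icc 0 M)
    (htail : ∀ θ ∈ Set.Ioc (0 : ℝ) M,
      |((univ.filter fun s => θ ≤ F s).card : ℝ) / a -
        ((univ.filter fun r => θ ≤ H r).card : ℝ) / b| ≤ β) :
    |(∑ s, F s) / a - (∑ r, H r) / b| ≤ M * β := by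
  have hiF := (antitone_card_filter_le_s10 F).intervalIntegrable (μ := volume) (a := 0) (b := M)
  have hiH := (antitone_card_filter_le_s10 H).intervalIntegrable (μ := volume) (a := 0) (b := M)
  rw [sum_eq_integral_card_filter_le F hF, sum_eq_integral_card_filter_le H hH,
    ← intervalIntegral.integral_div, ← intervalIntegral.integral_div,
    ← intervalIntegral.integral_sub (hiF.div_const a) (hiH.div_const b), ← Real.norm_eq_abs]
  refine (intervalIntegral.norm_integral_le_of_norm_le_const (C := β) ?_).trans_eq ?_
  · rw [Set.uIoc_of_le hM]
    simpa only [Real.norm_eq_abs] using htail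
  · rw [sub_zero, abs_of_nonneg hM, mul_comm]

end LayerCake

lemma sum_comp_div_eq_sum_mul_s10 {T Y : Type*} [Fintype T] [Fintype Y] [DecidableEq Y]
    (f : T → Y) {N : ℝ} {ρ : Y → ℝ}
    (hf : ∀ y, ((univ.filter fun r => f r = y).card : ℝ) / N = ρ y) (h : Y → ℝ) :
    (∑ r, h (f r)) / N = ∑ y, ρ y * h y := by
  rw [← sum_fiberwise univ f (fun r => h (f r)), sum_div]
  refine sum_congr rfl fun y _ => ?_
  rw [sum_congr rfl fun r hr => congrArg h (mem_filter.1 hr).2, sum_const, nsmul_eq_mul, ← hf y]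
  ring

lemma one_sub_le_sum_min {Y : Type*} [Fintype Y] {p q : Y → ℝ} {δ : ℝ} (hp : ∑ y, p y = 1)
    (hpq : ∑ y, max (p y - q y) 0 ≤ δ) : 1 - δ ≤ ∑ y, min (p y) (q y) := by
  have h : ∀ y, min (p y) (q y) = p y - max (p y - q y) 0 := fun y => by
    rcases le_total (p y) (q y) with h | h
    · rw [min_eq_left h, max_eq_right (by linarith)]; ring
    · rw [min_eq_right h, max_eq_left (by linarith)]; ring
  rw [sum_congr rfl fun y _ => h y, sum_sub_distrib, hp]
  linarith

lemma max_min_sub_mul_min_le {a b m K : ℝ} (hm : 0 ≤ m) (hK : 1 ≤ K) :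
    max (min a m - K * min b m) 0 ≤ max (a - K * b) 0 := by
  rcases le_total b m with h | h
  · rw [min_eq_left h]
    exact max_le_max (by nlinarith [min_le_left a m]) le_rfl
  · rw [min_eq_right h, max_eq_right (by nlinarith [min_le_right a m])]
    exact le_max_right _ _

lemma one_add_le_exp_mul_one_sub_s10 {u v : ℝ} (hu : 0 ≤ u) (hu' : u < 1 / 2) :
    1 + v ≤ Real.exp (2 * u + v) * (1 - u) := by
  have h2u : 1 ≤ Real.exp (2 * u) * (1 - u) := by
    nlinarith [Real.add_one_le_exp (2 * u)]
  have hv := Real.add_one_le_exp v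
  calc 1 + v ≤ Real.exp v := by linarith
    _ ≤ Real.exp (2 * u) * (1 - u) * Real.exp v := le_mul_of_one_le_left (by positivity) h2u
    _ = Real.exp (2 * u + v) * (1 - u) := by rw [Real.exp_add]; ring

lemma max_div_sub_mul_div_le {P Q Zp Zq K K' : ℝ} (hQ : 0 ≤ Q) (hZp : 0 < Zp) (hZq : 0 < Zq)
    (hK : K * Zq ≤ K' * Zp) :
    max (P / Zp - K' * (Q / Zq)) 0 ≤ max (P - K * Q) 0 / Zp := by
  rw [le_div_iff₀ hZp, max_mul_of_nonneg _ _ hZp.le, zero_mul]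
  refine max_le_max ?_ le_rfl
  have : K * Q ≤ K' * (Q / Zq) * Zp := by
    rw [mul_comm K' (Q / Zq), mul_assoc, div_mul_eq_mul_div, le_div_iff₀ hZq]
    nlinarith
  rw [sub_mul, div_mul_cancel₀ _ hZp.ne']
  linarith

lemma sum_max_div_sub_exp_mul_div_le {S : Type*} [Fintype S] {P Q : S → ℝ} {N εr u v d : ℝ}
    (hQ : ∀ s, 0 ≤ Q s) (hN : 0 < N) (hu : 0 ≤ u) (hu' : u < 1 / 2) (hd : 0 ≤ d)
    (hP : (1 - u) * N ≤ ∑ s, P s) (hQlo : (1 - u) * N ≤ ∑ s, Q s)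
    (hQhi : ∑ s, Q s ≤ (1 + v) * N) (hPQ : ∑ s, max (P s - Real.exp εr * Q s) 0 ≤ d * N) :
    ∑ s, max (P s / ∑ s', P s' - Real.exp (εr + 2 * u + v) * (Q s / ∑ s', Q s')) 0 ≤ 2 * d := by
  have hmass : 0 < (1 - u) * N := mul_pos (by linarith) hN
  have hZP := hmass.trans_le hP
  have hZQ := hmass.trans_le hQlo
  have hnormalizers : Real.exp εr * ∑ s, Q s ≤ Real.exp (εr + 2 * u + v) * ∑ s, P s := by
    rw [add_assoc, Real.exp_add, mul_assoc]
    gcongr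
    calc ∑ s, Q s ≤ (1 + v) * N := hQhi
      _ ≤ Real.exp (2 * u + v) * (1 - u) * N := by
          gcongr; exact one_add_le_exp_mul_one_sub_s10 hu hu'
      _ ≤ Real.exp (2 * u + v) * ∑ s, P s := by rw [mul_assoc]; gcongr
  calc _ ≤ ∑ s, max (P s - Real.exp εr * Q s) 0 / ∑ s', P s' :=
        sum_le_sum fun s _ => max_div_sub_mul_div_le (hQ s) hZP hZQ hnormalizers
    _ = (∑ s, max (P s - Real.exp εr * Q s) 0) / ∑ s', P s' := by rw [sum_div]
    _ ≤ d * N / ((1 - u) * N) := div_le_div₀ (by positivity) hPQ hmass hP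
    _ ≤ 2 * d := by
        rw [div_le_iff₀ hmass]
        nlinarith [mul_nonneg hd hN.le]

section TruncatedRatio

variable {Y : Type*} {p ρ : Y → ℝ} {ε : ℝ}

/-- The truncated density ratio `min (p / ρ) (exp ε)`, written so that it vanishes where
`ρ = 0`. -/
noncomputable def truncRatio (p ρ : Y → ℝ) (ε : ℝ) (y : Y) : ℝ :=
  min (p y) (Real.exp ε * ρ y) / ρ y

lemma truncRatio_nonneg {y : Y} (hp : 0 ≤ p y) (hρ : 0 ≤ ρ y) : 0 ≤ truncRatio p ρ ε y :=
  div_nonneg (le_min hp (by positivity)) hρ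

lemma truncRatio_le_exp {y : Y} (hρ : 0 ≤ ρ y) : truncRatio p ρ ε y ≤ Real.exp ε := by
  rcases hρ.eq_or_lt with h | h
  · simp [truncRatio, ← h, (Real.exp_pos ε).le]
  · exact (div_le_iff₀ h).2 (min_le_right _ _)

lemma mul_truncRatio {y : Y} (hp : 0 ≤ p y) :
    ρ y * truncRatio p ρ ε y = min (p y) (Real.exp ε * ρ y) := by
  by_cases h : ρ y = 0
  · simp [truncRatio, h, hp]
  · exact mul_div_cancel₀ _ h

lemma le_truncRatio_iff {y : Y} {θ : ℝ} (hρ : 0 ≤ ρ y) (hθ : θ ≤ Real.exp ε) :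
    θ ≤ truncRatio p ρ ε y ↔ θ ≤ p y / ρ y := by
  rcases hρ.eq_or_lt with h | h
  · simp [truncRatio, ← h]
  · rw [truncRatio, ← min_div_div_right h.le, mul_div_cancel_right₀ _ h.ne', le_min_iff,
      and_iff_left hθ]

variable {t ℓ : ℕ} {R₀ : (Fin t → Bool) → Y} {G : (Fin ℓ → Bool) → Fin t → Bool}
  {β : ℝ}

lemma sum_truncRatio_div_two_pow [Fintype Y] [DecidableEq Y] (hp : ∀ y, 0 ≤ p y)
    (hsamp : ∀ y, ((univ.filter fun r => R₀ r = y).card : ℝ) / 2 ^ t = ρ y) :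
    (∑ r, truncRatio p ρ ε (R₀ r)) / 2 ^ t = ∑ y, min (p y) (Real.exp ε * ρ y) := by
  rw [sum_comp_div_eq_sum_mul_s10 R₀ hsamp]
  exact sum_congr rfl fun y _ => mul_truncRatio (hp y)

lemma abs_sum_truncRatio_sub_le (hp : ∀ y, 0 ≤ p y) (hρ : ∀ y, 0 ≤ ρ y)
    (hfool : ∀ θ ∈ Set.Icc (0 : ℝ) (Real.exp ε),
      |((univ.filter fun s => θ ≤ p (R₀ (G s)) / ρ (R₀ (G s))).card : ℝ) / 2 ^ ℓ -
        ((univ.filter fun r => θ ≤ p (R₀ r) / ρ (R₀ r)).card : ℝ) / 2 ^ t| ≤ β) :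
    |(∑ s, truncRatio p ρ ε (R₀ (G s))) / 2 ^ ℓ - (∑ r, truncRatio p ρ ε (R₀ r)) / 2 ^ t|
      ≤ Real.exp ε * β := by
  refine abs_sum_div_sub_sum_div_le_of_tails_s10 _ _ (Real.exp_pos ε).le
    (fun s => ⟨truncRatio_nonneg (hp _) (hρ _), truncRatio_le_exp (hρ _)⟩)
    (fun r => ⟨truncRatio_nonneg (hp _) (hρ _), truncRatio_le_exp (hρ _)⟩) fun θ hθ => ?_
  simp only [le_truncRatio_iff (hρ _) hθ.2]
  exact hfool θ (Set.Ioc_subset_Icc_self hθ)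

variable [Fintype Y] [DecidableEq Y]

lemma sum_truncRatio_seed_bounds {δ : ℝ} (hp : ∀ y, 0 ≤ p y) (hp1 : ∑ y, p y = 1)
    (hρ : ∀ y, 0 ≤ ρ y) (hpδ : ∑ y, max (p y - Real.exp ε * ρ y) 0 ≤ δ)
    (hsamp : ∀ y, ((univ.filter fun r => R₀ r = y).card : ℝ) / 2 ^ t = ρ y)
    (hfool : ∀ θ ∈ Set.Icc (0 : ℝ) (Real.exp ε),
      |((univ.filter fun s => θ ≤ p (R₀ (G s)) / ρ (R₀ (G s))).card : ℝ) / 2 ^ ℓ -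
        ((univ.filter fun r => θ ≤ p (R₀ r) / ρ (R₀ r)).card : ℝ) / 2 ^ t| ≤ β) :
    (1 - (δ + Real.exp ε * β)) * 2 ^ ℓ ≤ ∑ s, truncRatio p ρ ε (R₀ (G s)) ∧
      ∑ s, truncRatio p ρ ε (R₀ (G s)) ≤ (1 + Real.exp ε * β) * 2 ^ ℓ := by
  have hclose := abs_le.1 (abs_sum_truncRatio_sub_le hp hρ hfool)
  rw [sum_truncRatio_div_two_pow hp hsamp] at hclose
  have hlo := one_sub_le_sum_min hp1 hpδ
  have hhi : ∑ y, min (p y) (Real.exp ε * ρ y) ≤ 1 :=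
    hp1 ▸ sum_le_sum fun y _ => min_le_left _ _
  constructor
  · rw [← le_div_iff₀ (by positivity)]; linarith
  · rw [← div_le_iff₀ (by positivity)]; linarith

lemma sum_max_truncRatio_sub_le {q : Y → ℝ} {εr δr : ℝ} (hp : ∀ y, 0 ≤ p y) (hq : ∀ y, 0 ≤ q y)
    (hρ : ∀ y, 0 ≤ ρ y) (hεr : 0 ≤ εr) (hpq : ∑ y, max (p y - Real.exp εr * q y) 0 ≤ δr)
    (hsamp : ∀ y, ((univ.filter fun r => R₀ r = y).card : ℝ) / 2 ^ t = ρ y)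
    (hfool : ∀ θ ∈ Set.Icc (0 : ℝ) (Real.exp ε),
      |((univ.filter fun s => θ ≤ truncRatio p ρ ε (R₀ (G s)) -
            Real.exp εr * truncRatio q ρ ε (R₀ (G s))).card : ℝ) / 2 ^ ℓ -
        ((univ.filter fun r => θ ≤ truncRatio p ρ ε (R₀ r) -
            Real.exp εr * truncRatio q ρ ε (R₀ r)).card : ℝ) / 2 ^ t| ≤ β) :
    ∑ s, max (truncRatio p ρ ε (R₀ (G s)) - Real.exp εr * truncRatio q ρ ε (R₀ (G s))) 0 ≤
      (δr + Real.exp ε * β) * 2 ^ ℓ := by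
  set D : Y → ℝ := fun y => max (truncRatio p ρ ε y - Real.exp εr * truncRatio q ρ ε y) 0
  have hD : ∀ y, D y ∈ Set.Icc 0 (Real.exp ε) := fun y =>
    ⟨le_max_right _ _, max_le ((sub_le_self _ (mul_nonneg (Real.exp_pos εr).le
      (truncRatio_nonneg (hq y) (hρ y)))).trans (truncRatio_le_exp (hρ y))) (Real.exp_pos ε).le⟩
  have hclose := abs_sum_div_sub_sum_div_le_of_tails_s10 (fun s => D (R₀ (G s))) (fun r => D (R₀ r))
    (Real.exp_pos ε).le (fun s => hD _) (fun r => hD _) fun θ hθ => by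
      simp only [D, le_max_iff, or_iff_left (not_le.2 hθ.1)]
      exact hfool θ (Set.Ioc_subset_Icc_self hθ)
  have hsampled : (∑ r, D (R₀ r)) / 2 ^ t ≤ δr := by
    rw [sum_comp_div_eq_sum_mul_s10 R₀ hsamp]
    refine (sum_le_sum fun y _ => ?_).trans hpq
    rw [mul_max_of_nonneg _ _ (hρ y), mul_zero, mul_sub, mul_left_comm, mul_truncRatio (hp y),
      mul_truncRatio (hq y)]
    exact max_min_sub_mul_min_le (mul_nonneg (Real.exp_pos ε).le (hρ y)) (Real.one_le_exp hεr)
  rw [← div_le_iff₀ (by positivity)]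
  linarith [(abs_le.1 hclose).2]

end TruncatedRatio

theorem stmt_10_general {X Y : Type*} [Fintype Y] [DecidableEq Y]
    (R : X → Y → ℝ) (ρ : Y → ℝ) (ε δ εr δr β : ℝ) (t ℓ : ℕ)
    (R₀ : (Fin t → Bool) → Y) (G : (Fin ℓ → Bool) → Fin t → Bool)
    (hRpmf : ∀ x, (∀ y, 0 ≤ R x y) ∧ ∑ y, R x y = 1)
    (hρpmf : (∀ y, 0 ≤ ρ y) ∧ ∑ y, ρ y = 1)
    (hεr : 0 ≤ εr) (hδ : 0 ≤ δ) (hδr : 0 ≤ δr) (hβ0 : 0 ≤ β)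
    (hsmall : δ + Real.exp ε * β < 1 / 2)
    (hDP : ∀ x, (∑ y, max (R x y - Real.exp ε * ρ y) 0 ≤ δ) ∧
      (∑ y, max (ρ y - Real.exp ε * R x y) 0 ≤ δ))
    (hDPr : ∀ x x' : X, ∑ y, max (R x y - Real.exp εr * R x' y) 0 ≤ δr)
    (hsamp : ∀ y, ((univ.filter fun r : Fin t → Bool => R₀ r = y).card : ℝ) / 2 ^ t = ρ y)
    (hfool : ∀ x : X, ∀ θ ∈ Set.Icc (0 : ℝ) (Real.exp ε),
      |((univ.filter fun s : Fin ℓ → Bool =>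
            θ ≤ R x (R₀ (G s)) / ρ (R₀ (G s))).card : ℝ) / 2 ^ ℓ -
        ((univ.filter fun r : Fin t → Bool =>
            θ ≤ R x (R₀ r) / ρ (R₀ r)).card : ℝ) / 2 ^ t| ≤ β)
    (hfooldiff : ∀ x x' : X, ∀ θ ∈ Set.Icc (0 : ℝ) (Real.exp ε),
      |((univ.filter fun s : Fin ℓ → Bool =>
            θ ≤ min (R x (R₀ (G s))) (Real.exp ε * ρ (R₀ (G s))) / ρ (R₀ (G s)) -
              Real.exp εr *
                (min (R x' (R₀ (G s))) (Real.exp ε * ρ (R₀ (G s))) / ρ (R₀ (G s)))).card : ℝ) /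
          2 ^ ℓ -
        ((univ.filter fun r : Fin t → Bool =>
            θ ≤ min (R x (R₀ r)) (Real.exp ε * ρ (R₀ r)) / ρ (R₀ r) -
              Real.exp εr *
                (min (R x' (R₀ r)) (Real.exp ε * ρ (R₀ r)) / ρ (R₀ r))).card : ℝ) / 2 ^ t| ≤ β) :
    ∀ x x' : X,
      ∑ s : Fin ℓ → Bool,
        max ((min (R x (R₀ (G s))) (Real.exp ε * ρ (R₀ (G s))) / ρ (R₀ (G s))) /
            (∑ s' : Fin ℓ → Bool,
              min (R x (R₀ (G s'))) (Real.exp ε * ρ (R₀ (G s'))) / ρ (R₀ (G s'))) -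
          Real.exp (εr + 2 * δ + 3 * Real.exp ε * β) *
            ((min (R x' (R₀ (G s))) (Real.exp ε * ρ (R₀ (G s))) / ρ (R₀ (G s))) /
              (∑ s' : Fin ℓ → Bool,
                min (R x' (R₀ (G s'))) (Real.exp ε * ρ (R₀ (G s'))) / ρ (R₀ (G s'))))) 0 ≤
        2 * (δr + Real.exp ε * β) := by
  intro x x'
  obtain ⟨hmass_x, -⟩ := sum_truncRatio_seed_bounds (hRpmf x).1 (hRpmf x).2 hρpmf.1 (hDP x).1
    hsamp (hfool x)
  obtain ⟨hmass_lo, hmass_hi⟩ := sum_truncRatio_seed_bounds (hRpmf x').1 (hRpmf x').2 hρpmf.1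
    (hDP x').1 hsamp (hfool x')
  have hdiff := sum_max_truncRatio_sub_le (hRpmf x).1 (hRpmf x').1 hρpmf.1 hεr (hDPr x x') hsamp
    (hfooldiff x x')
  rw [show εr + 2 * δ + 3 * Real.exp ε * β =
    εr + 2 * (δ + Real.exp ε * β) + Real.exp ε * β by ring]
  exact sum_max_div_sub_exp_mul_div_le (P := fun s => truncRatio (R x) ρ ε (R₀ (G s)))
    (Q := fun s => truncRatio (R x') ρ ε (R₀ (G s)))
    (fun s => truncRatio_nonneg ((hRpmf x').1 _) (hρpmf.1 _)) (by positivity) (by positivity)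
    hsmall (by positivity) hmass_x hmass_lo hmass_hi hdiff

/-- **The truncated compressed randomizer of a replacement (ε_r, δ_r)-DP and deletion
(ε, δ)-DP randomizer is replacement (ε_r + 2δ + 3e^ε β, 2δ_r + 2e^ε β)-DP**, provided `G`
β-fools both the density tests and the difference tests of `R`. Here
`π̃_x(y) = min(R(x)(y), e^ε ρ(y))/ρ(y)` and
`R̃[G](x)(s) = π̃_x(R₀(G s)) / ∑_{s'} π̃_x(R₀(G s'))`. -/
theorem stmt_10 {X Y : Type*} [Fintype X] [Fintype Y] [Nonempty X] [Nonempty Y] [DecidableEq Y]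
    (R : X → Y → ℝ) (ρ : Y → ℝ) (ε δ εr δr β : ℝ) (t ℓ : ℕ)
    (R₀ : (Fin t → Bool) → Y) (G : (Fin ℓ → Bool) → Fin t → Bool)
    (hRpmf : ∀ x, (∀ y, 0 ≤ R x y) ∧ ∑ y, R x y = 1)
    (hρpmf : (∀ y, 0 ≤ ρ y) ∧ ∑ y, ρ y = 1)
    (hε : 0 ≤ ε) (hεr : 0 ≤ εr) (hδ : 0 ≤ δ) (hδr : 0 ≤ δr) (hβ0 : 0 ≤ β)
    (hsmall : δ + Real.exp ε * β < 1 / 2)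
    (hDP : ∀ x, (∑ y, max (R x y - Real.exp ε * ρ y) 0 ≤ δ) ∧
      (∑ y, max (ρ y - Real.exp ε * R x y) 0 ≤ δ))
    (hDPr : ∀ x x' : X, ∑ y, max (R x y - Real.exp εr * R x' y) 0 ≤ δr)
    (hsamp : ∀ y, ((univ.filter fun r : Fin t → Bool => R₀ r = y).card : ℝ) / 2 ^ t = ρ y)
    (hfool : ∀ x : X, ∀ θ ∈ Set.Icc (0 : ℝ) (Real.exp ε),
      |((univ.filter fun s : Fin ℓ → Bool =>
            θ ≤ R x (R₀ (G s)) / ρ (R₀ (G s))).card : ℝ) / 2 ^ ℓ -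
        ((univ.filter fun r : Fin t → Bool =>
            θ ≤ R x (R₀ r) / ρ (R₀ r)).card : ℝ) / 2 ^ t| ≤ β)
    (hfooldiff : ∀ x x' : X, ∀ θ ∈ Set.Icc (0 : ℝ) (Real.exp ε),
      |((univ.filter fun s : Fin ℓ → Bool =>
            θ ≤ min (R x (R₀ (G s))) (Real.exp ε * ρ (R₀ (G s))) / ρ (R₀ (G s)) -
              Real.exp εr *
                (min (R x' (R₀ (G s))) (Real.exp ε * ρ (R₀ (G s))) / ρ (R₀ (G s)))).card : ℝ) /
          2 ^ ℓ -
        ((univ.filter fun r : Fin t → Bool =>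
            θ ≤ min (R x (R₀ r)) (Real.exp ε * ρ (R₀ r)) / ρ (R₀ r) -
              Real.exp εr *
                (min (R x' (R₀ r)) (Real.exp ε * ρ (R₀ r)) / ρ (R₀ r))).card : ℝ) / 2 ^ t| ≤ β) :
    ∀ x x' : X,
      ∑ s : Fin ℓ → Bool,
        max ((min (R x (R₀ (G s))) (Real.exp ε * ρ (R₀ (G s))) / ρ (R₀ (G s))) /
            (∑ s' : Fin ℓ → Bool,
              min (R x (R₀ (G s'))) (Real.exp ε * ρ (R₀ (G s'))) / ρ (R₀ (G s'))) -
          Real.exp (εr + 2 * δ + 3 * Real.exp ε * β) *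
            ((min (R x' (R₀ (G s))) (Real.exp ε * ρ (R₀ (G s))) / ρ (R₀ (G s))) /
              (∑ s' : Fin ℓ → Bool,
                min (R x' (R₀ (G s'))) (Real.exp ε * ρ (R₀ (G s'))) / ρ (R₀ (G s'))))) 0 ≤
        2 * (δr + Real.exp ε * β) :=
  stmt_10_general R ρ ε δ εr δr β t ℓ R₀ G hRpmf hρpmf hεr hδ hδr hβ0 hsmall hDP hDPr hsamp hfool
    hfooldiff
end

section
/- Let p be a prime, m ∈ ℕ with 0 < m < p, α₀ := m/p, and α₁ ∈ ℝ with α₀ < α₁ < 1, and consider the PI-RAPPOR randomizer M. Then: (i) for every nonzero j ∈ ZMod p, |Φ_{j,1}| = m·p and |Φ_{j,0}| = (p − m)·p, so M_j is a well-defined PMF on (ZMod p)²; (ii) PI-RAPPOR is deletion ln(max{α₁/α₀, (1−α₀)/(1−α₁)})-DP with reference the uniform distribution on (ZMod p)²: for every nonzero j and every φ ∈ (ZMod p)², p²·M_j(φ) ∈ {α₁/α₀, (1−α₁)/(1−α₀)}, hence min{α₀/α₁, (1−α₁)/(1−α₀)}·p^{-2} ≤ M_j(φ) ≤ max{α₁/α₀,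 (1−α₀)/(1−α₁)}·p^{-2}; and (iii) PI-RAPPOR is replacement ln(α₁(1−α₀)/(α₀(1−α₁)))-DP: for all distinct nonzero j, j' ∈ ZMod p and every φ, M_j(φ) ≤ (α₁·(1−α₀))/(α₀·(1−α₁)) · M_{j'}(φ). -/
/-!
Shearing `(φ₀, φ₁) ↦ (φ₀ + j φ₁, φ₁)` is a bijection of `(ZMod p)²`, so `Φ_{j,1}` has as many
elements as `{z | z.val < m} × ZMod p`, namely `m p`, which makes `M_j` a PMF. Since `α₀ = m/p`,
`p² M_j(φ)` takes only the two values `A = α₁/α₀ ≥ 1 ≥ B = (1 - α₁)/(1 - α₀)`, from which the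
deletion bounds are immediate, and any ratio `M_j(φ) / M_{j'}(φ)` is at most
`A / B = α₁(1 - α₀)/(α₀(1 - α₁))`.
-/

open Finset

theorem ZMod.card_filter_val_lt {p : ℕ} [NeZero p] {m : ℕ} (hmp : m ≤ p) :
    #{z : ZMod p | z.val < m} = m := by
  refine (card_nbij' ZMod.val Nat.cast (fun z hz => ?_) (fun n hn => ?_) (fun z _ => ?_)
    (fun n hn => ?_)).trans (card_range m)
  · simpa using hz
  · simp only [coe_range, Set.mem_Iio] at hn
    simpa [ZMod.val_cast_of_lt (hn.trans_le hmp)] using hn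
  · exact ZMod.natCast_zmod_val z
  · simp only [coe_range, Set.mem_Iio] at hn
    exact ZMod.val_cast_of_lt (hn.trans_le hmp)

theorem card_filter_add_comp_snd {G H : Type*} [AddGroup G] [Fintype G] [Fintype H]
    (P : G → Prop) [DecidablePred P] (f : H → G) :
    #{φ : G × H | P (φ.1 + f φ.2)} = #{z : G | P z} * Fintype.card H := by
  let shear : G × H ≃ G × H :=
    ⟨fun φ => (φ.1 + f φ.2, φ.2), fun φ => (φ.1 - f φ.2, φ.2), fun φ => by simp, fun φ => by simp⟩
  rw [card_equiv shear (t := {φ : G × H | P φ.1}) (fun φ => by simp [shear]),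
    ← univ_product_univ, filter_product_left, card_product, card_univ]

theorem ZMod.card_filter_add_mul_val_lt {p : ℕ} [NeZero p] {m : ℕ} (hmp : m ≤ p) (j : ZMod p) :
    #{φ : ZMod p × ZMod p | (φ.1 + j * φ.2).val < m} = m * p := by
  rw [card_filter_add_comp_snd (fun z : ZMod p => z.val < m) (j * ·),
    ZMod.card_filter_val_lt hmp, ZMod.card]

theorem ZMod.card_filter_add_mul_val_not_lt {p : ℕ} [NeZero p] {m : ℕ} (hmp : m ≤ p)
    (j : ZMod p) : #{φ : ZMod p × ZMod p | ¬ (φ.1 + j * φ.2).val < m} = (p - m) * p := by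
  have h := card_filter_add_card_filter_not (s := univ)
    (fun φ : ZMod p × ZMod p => (φ.1 + j * φ.2).val < m)
  rw [ZMod.card_filter_add_mul_val_lt hmp, card_univ, Fintype.card_prod, ZMod.card] at h
  rw [Nat.sub_mul]
  omega

theorem sum_ite_div_eq_one {ι : Type*} [Fintype ι] (P : ι → Prop) [DecidablePred P]
    {a b c : ℝ} (ha : (#{i | P i} : ℝ) = a) (hb : (#{i | ¬ P i} : ℝ) = b) (ha0 : a ≠ 0)
    (hb0 : b ≠ 0) :
    ∑ i, (if P i then c / a else (1 - c) / b) = 1 := by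
  rw [sum_ite, sum_const, sum_const, nsmul_eq_mul, nsmul_eq_mul, ha, hb,
    mul_div_cancel₀ _ ha0, mul_div_cancel₀ _ hb0]
  ring

theorem sq_mul_ite_div {p m : ℕ} (hm0 : 0 < m) (hmp : m < p) (c : ℝ) (b : Prop) [Decidable b] :
    (p : ℝ) ^ 2 * (if b then c / (m * p) else (1 - c) / ((p - m) * p)) =
      if b then c / (m / p) else (1 - c) / (1 - m / p) := by
  have hm : (0 : ℝ) < m := by exact_mod_cast hm0
  have hpm : (0 : ℝ) < p - m := sub_pos.2 (by exact_mod_cast hmp)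
  have hp : (0 : ℝ) < p := hm.trans (sub_pos.1 hpm)
  split_ifs
  · field_simp
  · rw [one_sub_div hp.ne']
    field_simp

theorem one_sub_div_one_sub_le_div {a b : ℝ} (ha : 0 < a) (hab : a ≤ b) (hb : b < 1) :
    (1 - b) / (1 - a) ≤ b / a :=
  ((div_le_one (by linarith)).2 (by linarith)).trans ((one_le_div ha).2 hab)

theorem le_and_le_of_mem_pair {A B x : ℝ} (hBA : B ≤ A) (hx : x ∈ ({A, B} : Set ℝ)) :
    B ≤ x ∧ x ≤ A := by
  rcases hx with rfl | rfl
  exacts [⟨hBA, le_rfl⟩, ⟨le_rfl, hBA⟩]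

theorem le_div_mul_of_mem_pair {A B x y : ℝ} (hB : 0 < B) (hBA : B ≤ A)
    (hx : x ∈ ({A, B} : Set ℝ)) (hy : y ∈ ({A, B} : Set ℝ)) : x ≤ A / B * y := by
  have hAB : 1 ≤ A / B := (one_le_div hB).2 hBA
  have hA : 0 ≤ A := hB.le.trans hBA
  rcases hx with rfl | rfl <;> rcases hy with rfl | rfl
  · exact le_mul_of_one_le_left hA hAB
  · rw [div_mul_cancel₀ _ hB.ne']
  · exact hBA.trans (le_mul_of_one_le_left hA hAB)
  · rwa [div_mul_cancel₀ _ hB.ne']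

/-- **Well-definedness and privacy of the PI-RAPPOR randomizer.**
With `α₀ = m/p`, `bool(z) = (z.val < m)`, and
`M j φ = α₁/(mp)` if `bool(φ₀ + j·φ₁) = 1` and `(1−α₁)/((p−m)p)` otherwise:
(i) `|Φ_{j,1}| = m·p`, `|Φ_{j,0}| = (p−m)·p`, and `M j` is a PMF;
(ii) `p²·M_j(φ) ∈ {α₁/α₀, (1−α₁)/(1−α₀)}`, hence
`min{α₀/α₁, (1−α₁)/(1−α₀)}·p⁻² ≤ M_j(φ) ≤ max{α₁/α₀, (1−α₀)/(1−α₁)}·p⁻²`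
(deletion `ln(max{α₁/α₀, (1−α₀)/(1−α₁)})`-DP with uniform reference);
(iii) `M_j(φ) ≤ (α₁(1−α₀))/(α₀(1−α₁))·M_{j'}(φ)` for distinct nonzero `j, j'`
(replacement `ln(α₁(1−α₀)/(α₀(1−α₁)))`-DP). -/
theorem stmt_13 (p : ℕ) [Fact p.Prime] (m : ℕ) (hm0 : 0 < m) (hmp : m < p)
    (α₀ α₁ : ℝ) (hα₀ : α₀ = (m : ℝ) / p) (hα₁ : α₀ < α₁) (hα₁' : α₁ < 1)
    (M : ZMod p → ZMod p × ZMod p → ℝ)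
    (hM : ∀ j φ, M j φ =
      if (φ.1 + j * φ.2).val < m then α₁ / (m * p) else (1 - α₁) / ((p - m) * p)) :
    (∀ j : ZMod p, j ≠ 0 →
      (univ.filter fun φ : ZMod p × ZMod p => (φ.1 + j * φ.2).val < m).card = m * p ∧
      (univ.filter fun φ : ZMod p × ZMod p => ¬ (φ.1 + j * φ.2).val < m).card = (p - m) * p ∧
      (∀ φ, 0 ≤ M j φ) ∧ ∑ φ : ZMod p × ZMod p, M j φ = 1) ∧
    (∀ j : ZMod p, j ≠ 0 → ∀ φ : ZMod p × ZMod p,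
      ((p : ℝ) ^ 2 * M j φ ∈ ({α₁ / α₀, (1 - α₁) / (1 - α₀)} : Set ℝ)) ∧
      min (α₀ / α₁) ((1 - α₁) / (1 - α₀)) * ((p : ℝ) ^ 2)⁻¹ ≤ M j φ ∧
      M j φ ≤ max (α₁ / α₀) ((1 - α₀) / (1 - α₁)) * ((p : ℝ) ^ 2)⁻¹) ∧
    (∀ j j' : ZMod p, j ≠ 0 → j' ≠ 0 → j ≠ j' → ∀ φ : ZMod p × ZMod p,
      M j φ ≤ (α₁ * (1 - α₀)) / (α₀ * (1 - α₁)) * M j' φ) := by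
  have hp : (0 : ℝ) < p := by exact_mod_cast hm0.trans hmp
  have hα₀pos : 0 < α₀ := by rw [hα₀]; positivity
  have hB : 0 < (1 - α₁) / (1 - α₀) := div_pos (by linarith) (by linarith)
  have hBA : (1 - α₁) / (1 - α₀) ≤ α₁ / α₀ := one_sub_div_one_sub_le_div hα₀pos hα₁.le hα₁'
  have hvalues (j : ZMod p) (φ : ZMod p × ZMod p) :
      (p : ℝ) ^ 2 * M j φ ∈ ({α₁ / α₀, (1 - α₁) / (1 - α₀)} : Set ℝ) := by
    rw [hM, sq_mul_ite_div hm0 hmp, ← hα₀]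
    split_ifs <;> simp
  have hunscale (j : ZMod p) (φ : ZMod p × ZMod p) :
      M j φ = (p : ℝ) ^ 2 * M j φ * ((p : ℝ) ^ 2)⁻¹ := by
    field_simp
  refine ⟨fun j _ => ⟨ZMod.card_filter_add_mul_val_lt hmp.le j,
    ZMod.card_filter_add_mul_val_not_lt hmp.le j, fun φ => ?_, ?_⟩,
    fun j _ φ => ⟨hvalues j φ, ?_, ?_⟩, fun j j' _ _ _ φ => ?_⟩
  · rw [hunscale]
    exact mul_nonneg (hB.trans_le (le_and_le_of_mem_pair hBA (hvalues j φ)).1).le (by positivity)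
  · have hpm : (0 : ℝ) < p - m := sub_pos.2 (by exact_mod_cast hmp)
    simp only [hM]
    exact sum_ite_div_eq_one _
      (by rw [ZMod.card_filter_add_mul_val_lt hmp.le j]; push_cast; ring)
      (by rw [ZMod.card_filter_add_mul_val_not_lt hmp.le j]; push_cast [Nat.cast_sub hmp.le]; ring)
      (by positivity) (by positivity)
  · rw [hunscale]
    exact mul_le_mul_of_nonneg_right
      ((min_le_right _ _).trans (le_and_le_of_mem_pair hBA (hvalues j φ)).1) (by positivity)
  · rw [hunscale]
    exact mul_le_mul_of_nonneg_right
      ((le_and_le_of_mem_pair hBA (hvalues j φ)).2.trans (le_max_left _ _)) (by positivity)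
  · rw [hunscale j, hunscale j', ← div_div_div_eq, ← mul_assoc]
    exact mul_le_mul_of_nonneg_right (le_div_mul_of_mem_pair hB hBA (hvalues j φ) (hvalues j' φ))
      (by positivity)
end
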